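/- arXiv:1705.05262 — 10 statements merged into one kernel-verified Lean document; each statement's English description precedes it below -/
import Mathlib

section
/- Let ℋ be a complex Hilbert space and let L₊, L₋ be linear subspaces of ℋ. A linear subspace 𝒫 ⊆ L₊ × L₋ is positive for the signed form, i.e. ‖k₊‖² − ‖k₋‖² ≥ 0 for every (k₊, k₋) ∈ 𝒫, if and only if there exist a linear subspace D ⊆ L₊ and a linear map C : D → L₋ satisfying ‖Ck‖ ≤ ‖k‖ for all k ∈ D such that 𝒫 = {(k, Ck) : k ∈ D}, i.e. 𝒫 is the graph of a (partially defined) linear contraction from L₊ to L₋. -/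
/-! Positivity says `‖k₋‖ ≤ ‖k₊‖` on `𝒫`; in particular `k₊ = 0` forces `k₋ = 0`, so `𝒫` is the graph
of a linear partial map (`Submodule.toLinearPMap`), which is then a contraction on its domain. -/

theorem LinearPMap.coe_graph {R E F : Type*} [Ring R] [AddCommGroup E] [AddCommGroup F]
    [Module R E] [Module R F] (f : E →ₗ.[R] F) :
    (f.graph : Set (E × F)) = {p | ∃ k : f.domain, p = ((k : E), f k)} := by
  ext p
  simp only [SetLike.mem_coe, mem_graph_iff', Set.mem_ofPred_eq, eq_comm]

section Contraction

variable {R E F : Type*} [Ring R] [SeminormedAddCommGroup E] [NormedAddCommGroup F]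
  [Module R E] [Module R F]

theorem Submodule.exists_graph_of_norm_snd_le_norm_fst {S : Submodule R (E × F)}
    (hS : ∀ x ∈ S, ‖x.2‖ ≤ ‖x.1‖) :
    ∃ (D : Submodule R E) (C : D →ₗ[R] F),
      (∀ k : D, ‖C k‖ ≤ ‖(k : E)‖) ∧ (S : Set (E × F)) = {p | ∃ k : D, p = ((k : E), C k)} := by
  have hfun : ∀ x ∈ S, x.1 = 0 → x.2 = 0 := fun x hx h1 =>
    norm_le_zero_iff.mp (by simpa [h1] using hS x hx)
  obtain ⟨f, rfl⟩ : ∃ f : E →ₗ.[R] F, f.graph = S := ⟨_, S.toLinearPMap_graph_eq hfun⟩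
  exact ⟨f.domain, f.toFun, fun k => hS _ (f.mem_graph k), f.coe_graph⟩

theorem Submodule.norm_snd_le_norm_fst_of_eq_graph {S : Submodule R (E × F)}
    {D : Submodule R E} {C : D →ₗ[R] F} (hC : ∀ k : D, ‖C k‖ ≤ ‖(k : E)‖)
    (hS : (S : Set (E × F)) = {p | ∃ k : D, p = ((k : E), C k)}) :
    ∀ x ∈ S, ‖x.2‖ ≤ ‖x.1‖ := by
  intro x hx
  obtain ⟨k, rfl⟩ : x ∈ {p | ∃ k : D, p = ((k : E), C k)} := hS ▸ hx
  exact hC k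

end Contraction

theorem stmt1_general {H : Type*} [NormedAddCommGroup H] [InnerProductSpace ℂ H]
    (Lp Lm : Submodule ℂ H) (S : Submodule ℂ (Lp × Lm)) :
    (∀ x ∈ S, (0 : ℝ) ≤ ‖(x.1 : H)‖ ^ 2 - ‖(x.2 : H)‖ ^ 2) ↔
      ∃ (D : Submodule ℂ Lp) (C : D →ₗ[ℂ] Lm),
        (∀ k : D, ‖C k‖ ≤ ‖(k : Lp)‖) ∧
          (S : Set (Lp × Lm)) = {p | ∃ k : D, p = ((k : Lp), C k)} := by
  have hpos : ∀ x : Lp × Lm, (0 : ℝ) ≤ ‖(x.1 : H)‖ ^ 2 - ‖(x.2 : H)‖ ^ 2 ↔ ‖x.2‖ ≤ ‖x.1‖ :=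
    fun x => sub_nonneg.trans (sq_le_sq₀ (norm_nonneg _) (norm_nonneg _))
  simp only [hpos]
  exact ⟨Submodule.exists_graph_of_norm_snd_le_norm_fst,
    fun ⟨_, _, hC, hS⟩ => Submodule.norm_snd_le_norm_fst_of_eq_graph hC hS⟩

/-- A subspace `S ⊆ Lp × Lm` is positive for the signed form
`‖k₊‖² - ‖k₋‖²` iff it is the graph of a (partially defined) linear contraction
`C : D → Lm` with `D ⊆ Lp`. -/
theorem stmt1 {H : Type*} [NormedAddCommGroup H] [InnerProductSpace ℂ H] [CompleteSpace H]
    (Lp Lm : Submodule ℂ H) (S : Submodule ℂ (Lp × Lm)) :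
    (∀ x ∈ S, (0 : ℝ) ≤ ‖(x.1 : H)‖ ^ 2 - ‖(x.2 : H)‖ ^ 2) ↔
      ∃ (D : Submodule ℂ Lp) (C : D →ₗ[ℂ] Lm),
        (∀ k : D, ‖C k‖ ≤ ‖(k : Lp)‖) ∧
          (S : Set (Lp × Lm)) = {p | ∃ k : D, p = ((k : Lp), C k)} :=
  stmt1_general Lp Lm S
end

section
/- Let θ be a reflection on a complex Hilbert space ℋ and let P be the orthogonal projection onto {h ∈ ℋ : θh = h}, so θ = 2P − I. For a closed subspace ℋ₊ ⊆ ℋ the following are equivalent: (i) the real number ⟨h₊, θh₊⟩ is ≥ 0 for every h₊ ∈ ℋ₊ (O.S. positivity); (ii) there exists a linear map C from the range of P to the orthogonal complement (range P)⊥ with ‖Cu‖ ≤ ‖u‖ for all u ∈ range P, such that ℋ₊ ⊆ {u + Cu : u ∈ range P}, i.e. ℋ₊ is contained in the graph of a contraction from Pℋ to P⊥ℋ. -/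
open scoped ComplexInnerProductSpace ComplexOrder

/-!
Splitting `h = Ph + (1 - P)h` orthogonally gives `⟪h, θh⟫ = ‖Ph‖² - ‖(1 - P)h‖²`, so O.S.
positivity on `Hp` says that `‖(1 - P)h‖ ≤ ‖Ph‖` for `h ∈ Hp`. Such a norm domination is the same as
a factorization `(1 - P)h = C (Ph)` through a contraction `C : Pℋ → P⊥ℋ`: the bound makes
`Ph ↦ (1 - P)h` a well-defined contraction on `P Hp`, which extends by continuity to the closure
of `P Hp` and then to all of `Pℋ` by precomposing with the orthogonal projection onto that closure.
-/

theorem LinearMap.denseRange_codRestrict_topologicalClosure {R V K : Type*} [Semiring R]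
    [AddCommMonoid V] [Module R V] [AddCommMonoid K] [Module R K] [TopologicalSpace K]
    [ContinuousAdd K] [ContinuousConstSMul R K] (f : V →ₗ[R] K) :
    DenseRange (f.codRestrict (range f).topologicalClosure
      fun v => (range f).le_topologicalClosure (f.mem_range_self v)) := by
  rw [DenseRange, Topology.IsInducing.subtypeVal.dense_iff]
  intro x
  rw [← Set.range_comp]
  exact x.2

theorem LinearMap.exists_contraction_comp_eq_of_norm_le {𝕜 V K F : Type*} [RCLike 𝕜]
    [AddCommGroup V] [Module 𝕜 V] [NormedAddCommGroup K] [InnerProductSpace 𝕜 K] [CompleteSpace K]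
    [NormedAddCommGroup F] [NormedSpace 𝕜 F] [CompleteSpace F]
    (f : V →ₗ[𝕜] K) (g : V →ₗ[𝕜] F) (hfg : ∀ v, ‖g v‖ ≤ ‖f v‖) :
    ∃ C : K →L[𝕜] F, (∀ x, ‖C x‖ ≤ ‖x‖) ∧ ∀ v, C (f v) = g v := by
  set L := (range f).topologicalClosure
  set e : V →ₗ[𝕜] L :=
    f.codRestrict L fun v => (range f).le_topologicalClosure (f.mem_range_self v)
  have he : DenseRange e := f.denseRange_codRestrict_topologicalClosure
  have hge : ∀ v, ‖g v‖ ≤ 1 * ‖e v‖ := fun v => (hfg v).trans_eq (one_mul _).symm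
  refine ⟨g.extendOfNorm e ∘L L.orthogonalProjectionOnto, fun x => ?_, fun v => ?_⟩
  · calc ‖g.extendOfNorm e (L.orthogonalProjectionOnto x)‖
        ≤ 1 * ‖L.orthogonalProjectionOnto x‖ := norm_extendOfNorm_apply_le he 1 hge _
      _ ≤ ‖x‖ := by simpa using L.norm_orthogonalProjectionOnto_apply_le x
  · have hfv : L.orthogonalProjectionOnto (f v) = e v :=
      L.orthogonalProjectionOnto_mem_subspace_eq_self (e v)
    simp [hfv, extendOfNorm_eq he ⟨1, hge⟩]

namespace Submodule

variable {𝕜 E : Type*} [RCLike 𝕜] [NormedAddCommGroup E] [InnerProductSpace 𝕜 E]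

theorem inner_reflection_self (K : Submodule 𝕜 E) [K.HasOrthogonalProjection] (h : E) :
    inner 𝕜 h (K.reflection h) =
      ((‖K.starProjection h‖ ^ 2 - ‖Kᗮ.starProjection h‖ ^ 2 : ℝ) : 𝕜) := by
  have hu := K.starProjection_apply_mem h
  have hw := Kᗮ.starProjection_apply_mem h
  have hsplit : h = K.starProjection h + Kᗮ.starProjection h :=
    (K.starProjection_add_starProjection_orthogonal h).symm
  have hrefl : K.reflection h = K.starProjection h - Kᗮ.starProjection h := by
    rw [reflection_apply, starProjection_orthogonal_val, two_smul]
    abel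
  rw [hrefl]
  nth_rw 1 [hsplit]
  simp only [inner_add_left, inner_sub_right, inner_right_of_mem_orthogonal hu hw,
    inner_left_of_mem_orthogonal hu hw, inner_self_eq_norm_sq_to_K]
  push_cast
  ring

theorem zero_le_inner_reflection_self_iff (K : Submodule 𝕜 E) [K.HasOrthogonalProjection]
    (h : E) : 0 ≤ inner 𝕜 h (K.reflection h) ↔ ‖Kᗮ.starProjection h‖ ≤ ‖K.starProjection h‖ := by
  rw [inner_reflection_self, RCLike.ofReal_nonneg, sub_nonneg,
    pow_le_pow_iff_left₀ (norm_nonneg _) (norm_nonneg _) two_ne_zero]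

theorem exists_contraction_subset_graph_iff [CompleteSpace E] (K : Submodule 𝕜 E)
    [CompleteSpace K] (V : Submodule 𝕜 E) :
    (∃ C : K →ₗ[𝕜] Kᗮ, (∀ u, ‖C u‖ ≤ ‖u‖) ∧ (V : Set E) ⊆ {h | ∃ u : K, h = u + C u}) ↔
      ∀ h ∈ V, ‖Kᗮ.starProjection h‖ ≤ ‖K.starProjection h‖ := by
  constructor
  · rintro ⟨C, hC, hV⟩ h hh
    obtain ⟨u, rfl⟩ := hV hh
    have hu : K.starProjection (u + C u) = u :=
      eq_starProjection_of_mem_orthogonal' u.2 (C u).2 rfl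
    simpa [hu] using hC u
  · intro hV
    obtain ⟨C, hC, hCV⟩ := LinearMap.exists_contraction_comp_eq_of_norm_le
      ((K.orthogonalProjectionOnto : E →ₗ[𝕜] K) ∘ₗ V.subtype)
      ((Kᗮ.orthogonalProjectionOnto : E →ₗ[𝕜] Kᗮ) ∘ₗ V.subtype) fun v => hV v v.2
    refine ⟨C, hC, fun h hh => ⟨K.orthogonalProjectionOnto h, ?_⟩⟩
    have hCh : C (K.orthogonalProjectionOnto h) = Kᗮ.orthogonalProjectionOnto h := hCV ⟨h, hh⟩
    simp only [ContinuousLinearMap.coe_coe, hCh]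
    exact (K.starProjection_add_starProjection_orthogonal h).symm

end Submodule

theorem stmt2_general {H : Type*} [NormedAddCommGroup H] [InnerProductSpace ℂ H] [CompleteSpace H]
    (θ P : H →L[ℂ] H)
    (hP_sa : IsSelfAdjoint P) (hP_idem : P ∘L P = P)
    (hθP : θ = 2 • P - 1)
    (Hp : Submodule ℂ H) :
    (∀ h ∈ Hp, (0 : ℂ) ≤ ⟪h, θ h⟫) ↔
      ∃ C : (LinearMap.range (P : H →ₗ[ℂ] H)) →ₗ[ℂ] ((LinearMap.range (P : H →ₗ[ℂ] H))ᗮ),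
        (∀ u : LinearMap.range (P : H →ₗ[ℂ] H), ‖C u‖ ≤ ‖u‖) ∧
          (Hp : Set H) ⊆ {h : H | ∃ u : LinearMap.range (P : H →ₗ[ℂ] H), h = (u : H) + (C u : H)} := by
  have hP : IsStarProjection P := ⟨hP_idem, hP_sa⟩
  have : CompleteSpace (LinearMap.range (P : H →ₗ[ℂ] H)) :=
    (ContinuousLinearMap.IsIdempotentElem.isClosed_range hP.isIdempotentElem).completeSpace_coe
  obtain ⟨_, hPK⟩ := isStarProjection_iff_eq_starProjection_range.mp hP
  rw [Submodule.exists_contraction_subset_graph_iff]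
  refine forall₂_congr fun h _ => ?_
  have hθ : θ h = (LinearMap.range (P : H →ₗ[ℂ] H)).reflection h := by
    rw [Submodule.reflection_apply, ← hPK, hθP]
    rfl
  rw [hθ, Submodule.zero_le_inner_reflection_self_iff]

/-- For a reflection `θ = 2P - 1` and a closed subspace `Hp`,
O.S. positivity `⟪h, θ h⟫ ≥ 0` on `Hp` holds iff `Hp` is contained in the graph of a
contraction `C : range P → (range P)ᗮ`. -/
theorem stmt2 {H : Type*} [NormedAddCommGroup H] [InnerProductSpace ℂ H] [CompleteSpace H]
    (θ P : H →L[ℂ] H)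
    (hθ_sa : IsSelfAdjoint θ) (hθ_invol : θ ∘L θ = 1)
    (hP_sa : IsSelfAdjoint P) (hP_idem : P ∘L P = P)
    (hP_range : ∀ h : H, P h = h ↔ θ h = h)
    (hθP : θ = 2 • P - 1)
    (Hp : Submodule ℂ H) (hHp_closed : IsClosed (Hp : Set H)) :
    (∀ h ∈ Hp, (0 : ℂ) ≤ ⟪h, θ h⟫) ↔
      ∃ C : (LinearMap.range (P : H →ₗ[ℂ] H)) →ₗ[ℂ] ((LinearMap.range (P : H →ₗ[ℂ] H))ᗮ),
        (∀ u : LinearMap.range (P : H →ₗ[ℂ] H), ‖C u‖ ≤ ‖u‖) ∧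
          (Hp : Set H) ⊆ {h : H | ∃ u : LinearMap.range (P : H →ₗ[ℂ] H), h = (u : H) + (C u : H)} :=
  stmt2_general θ P hP_sa hP_idem hθP Hp
end

section
/- Let θ be a reflection on a complex Hilbert space ℋ with θ = 2P − I, and let Sub_OS(θ) be the collection of closed subspaces M ⊆ ℋ such that ⟨h, θh⟩ ≥ 0 for all h ∈ M, partially ordered by inclusion. Then: (1) for every contraction C : Pℋ → P⊥ℋ, the closed subspace ℋ₊(P,C) := {x + Cx : x ∈ range P} is a maximal element of Sub_OS(θ); and (2) every maximal element of Sub_OS(θ) is of the form ℋ₊(P,C) for some contraction C : Pℋ → P⊥ℋ. -/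
/-!
With `θ = 2P - 1` one has `⟪h, θ h⟫ = ‖P h‖² - ‖(1 - P) h‖²`, so `Sub_OS(θ)` consists of the closed
subspaces on which `1 - P` is dominated by `P`. On such an `M` the triangle inequality gives
`‖h‖ ≤ 2 ‖P h‖`, so `P` maps `M` isomorphically onto a closed subspace `K₀` of `range P`, and `M` is
the graph of the contraction `(1 - P) ∘ (P|_M)⁻¹` on `K₀`; extended by zero on the orthogonal
complement of `K₀` in `range P`, this exhibits every element of `Sub_OS(θ)` inside the graph of a
contraction. Graphs are themselves in `Sub_OS(θ)`, and nothing in `Sub_OS(θ)` properly contains one: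
the difference between a vector and the graph point over its `P`-component is killed by `P`, hence
vanishes.
-/

open scoped ComplexInnerProductSpace ComplexOrder

/-- The subspace `{x + Cx : x ∈ K}` of `H`, for a linear map `C : K → Kᗮ`. -/
noncomputable def graphSubspace {H : Type*} [NormedAddCommGroup H] [InnerProductSpace ℂ H]
    (K : Submodule ℂ H) (C : K →ₗ[ℂ] Kᗮ) : Submodule ℂ H :=
  LinearMap.range (K.subtype + Kᗮ.subtype.comp C)

/-- The collection `Sub_OS(θ)` of closed subspaces `M` on which `⟪h, θ h⟫ ≥ 0`. -/
def SubOS {H : Type*} [NormedAddCommGroup H] [InnerProductSpace ℂ H]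
    (θ : H →L[ℂ] H) : Set (Submodule ℂ H) :=
  {M | IsClosed (M : Set H) ∧ ∀ h ∈ M, (0 : ℂ) ≤ ⟪h, θ h⟫}

section

variable {H : Type*} [NormedAddCommGroup H] [InnerProductSpace ℂ H]
  {K : Submodule ℂ H} [K.HasOrthogonalProjection]

theorem inner_two_smul_starProjection_sub_one_apply_self (h : H) :
    ⟪h, (2 • K.starProjection - 1 : H →L[ℂ] H) h⟫ =
      ((‖K.starProjection h‖ ^ 2 - ‖Kᗮ.starProjection h‖ ^ 2 : ℝ) : ℂ) := by
  have hP : ⟪h, K.starProjection h⟫ = ((‖K.starProjection h‖ ^ 2 : ℝ) : ℂ) :=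
    calc ⟪h, K.starProjection h⟫ = ⟪K.starProjection h, K.starProjection h⟫ := by
          rw [K.inner_starProjection_left_eq_right,
            K.starProjection_eq_self_iff.mpr (K.starProjection_apply_mem h)]
      _ = _ := by rw [inner_self_eq_norm_sq_to_K]; norm_cast
  have hpyth : (‖h‖ : ℂ) ^ 2 = ‖K.starProjection h‖ ^ 2 + ‖Kᗮ.starProjection h‖ ^ 2 := by
    exact_mod_cast K.norm_sq_eq_add_norm_sq_starProjection h
  rw [sub_apply, smul_apply, inner_sub_right, inner_smul_right_eq_smul, hP, one_apply_eq_self,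
    inner_self_eq_norm_sq_to_K]
  push_cast
  linear_combination -hpyth

theorem mem_subOS_two_smul_starProjection_sub_one_iff {M : Submodule ℂ H} :
    M ∈ SubOS (2 • K.starProjection - 1 : H →L[ℂ] H) ↔
      IsClosed (M : Set H) ∧ ∀ h ∈ M, ‖Kᗮ.starProjection h‖ ≤ ‖K.starProjection h‖ := by
  simp only [SubOS, Set.mem_ofPred_eq, inner_two_smul_starProjection_sub_one_apply_self,
    Complex.zero_le_real, sub_nonneg]
  refine and_congr_right fun _ => forall₂_congr fun h _ => ?_
  exact pow_le_pow_iff_left₀ (norm_nonneg _) (norm_nonneg _) two_ne_zero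

theorem mem_graphSubspace_iff (C : K →ₗ[ℂ] Kᗮ) {h : H} :
    h ∈ graphSubspace K C ↔ Kᗮ.starProjection h = C (K.orthogonalProjectionOnto h) := by
  constructor
  · rintro ⟨x, rfl⟩
    simp [K.starProjection_apply_eq_zero_iff.mpr (C x).2,
      K.orthogonalProjectionOnto_eq_zero_iff.mpr (C x).2]
  · intro hh
    refine ⟨K.orthogonalProjectionOnto h, ?_⟩
    simp [← hh]

theorem isClosed_graphSubspace {C : K →ₗ[ℂ] Kᗮ} (hC : Continuous C) :
    IsClosed (graphSubspace K C : Set H) := by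
  have hgraph : (graphSubspace K C : Set H) =
      {h | Kᗮ.starProjection h = C (K.orthogonalProjectionOnto h)} :=
    Set.ext fun _ => mem_graphSubspace_iff C
  rw [hgraph]
  exact isClosed_eq Kᗮ.starProjection.continuous
    (continuous_subtype_val.comp (hC.comp K.orthogonalProjectionOnto.continuous))

theorem norm_starProjection_orthogonal_le_of_mem_graphSubspace {C : K →ₗ[ℂ] Kᗮ}
    (hC : ∀ u, ‖C u‖ ≤ ‖u‖) {h : H} (hh : h ∈ graphSubspace K C) :
    ‖Kᗮ.starProjection h‖ ≤ ‖K.starProjection h‖ := by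
  rw [(mem_graphSubspace_iff C).mp hh]
  exact hC _

theorem graphSubspace_mem_subOS {C : K →ₗ[ℂ] Kᗮ} (hC : ∀ u, ‖C u‖ ≤ ‖u‖) :
    graphSubspace K C ∈ SubOS (2 • K.starProjection - 1 : H →L[ℂ] H) :=
  mem_subOS_two_smul_starProjection_sub_one_iff.mpr
    ⟨isClosed_graphSubspace (AddMonoidHomClass.continuous_of_bound C 1 (by simpa using hC)),
      fun _ => norm_starProjection_orthogonal_le_of_mem_graphSubspace hC⟩

variable {M : Submodule ℂ H}
  (hM : ∀ h ∈ M, ‖Kᗮ.starProjection h‖ ≤ ‖K.starProjection h‖)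
include hM

theorem norm_le_two_mul_norm_starProjection {h : H} (hh : h ∈ M) :
    ‖h‖ ≤ 2 * ‖K.starProjection h‖ :=
  calc ‖h‖ = ‖K.starProjection h + Kᗮ.starProjection h‖ := by
        rw [K.starProjection_add_starProjection_orthogonal]
    _ ≤ ‖K.starProjection h‖ + ‖Kᗮ.starProjection h‖ := norm_add_le _ _
    _ ≤ 2 * ‖K.starProjection h‖ := by linarith [hM h hh]

theorem eq_graphSubspace_of_graphSubspace_le {C : K →ₗ[ℂ] Kᗮ} (hle : graphSubspace K C ≤ M) :
    M = graphSubspace K C := by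
  refine le_antisymm (fun h hh => ?_) hle
  set g : H := K.orthogonalProjectionOnto h + C (K.orthogonalProjectionOnto h)
  have hg : g ∈ graphSubspace K C := ⟨_, rfl⟩
  have hPg : K.starProjection (h - g) = 0 := by
    simp [g, K.starProjection_apply_eq_zero_iff.mpr (C _).2,
      K.starProjection_eq_self_iff.mpr (K.starProjection_apply_mem h)]
  have hhg : ‖h - g‖ ≤ 0 := by
    simpa [hPg] using norm_le_two_mul_norm_starProjection hM (M.sub_mem hh (hle hg))
  rwa [sub_eq_zero.mp (norm_le_zero_iff.mp hhg)]

theorem exists_contraction_le_graphSubspace [CompleteSpace H] (hMc : IsClosed (M : Set H)) :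
    ∃ C : K →ₗ[ℂ] Kᗮ, (∀ u, ‖C u‖ ≤ ‖u‖) ∧ M ≤ graphSubspace K C := by
  have : CompleteSpace K :=
    (K.orthogonal_orthogonal ▸ Kᗮ.isClosed_orthogonal : IsClosed (K : Set H)).completeSpace_coe
  have : CompleteSpace M := hMc.completeSpace_coe
  let φ : M →L[ℂ] K := K.orthogonalProjectionOnto ∘L M.subtypeL
  have hφ : AntilipschitzWith 2 φ :=
    φ.antilipschitz_of_bound fun m => norm_le_two_mul_norm_starProjection hM m.2
  let K₀ : Submodule ℂ K := LinearMap.range (φ : M →ₗ[ℂ] K)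
  have : CompleteSpace K₀ := (hφ.isClosed_range φ.uniformContinuous).completeSpace_coe
  let e : M ≃ₗ[ℂ] K₀ := LinearEquiv.ofInjective (φ : M →ₗ[ℂ] K) hφ.injective
  let ψ : M →ₗ[ℂ] Kᗮ := (Kᗮ.orthogonalProjectionOnto ∘L M.subtypeL : M →L[ℂ] Kᗮ)
  refine ⟨ψ ∘ₗ e.symm.toLinearMap ∘ₗ (K₀.orthogonalProjectionOnto : K →ₗ[ℂ] K₀),
    fun u => ?_, fun h hh => ?_⟩
  · set m := e.symm (K₀.orthogonalProjectionOnto u)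
    have hφm : φ m = K₀.orthogonalProjectionOnto u :=
      LinearEquiv.ofInjective_symm_apply (φ : M →ₗ[ℂ] K) _
    calc ‖ψ m‖ = ‖Kᗮ.starProjection m‖ := rfl
      _ ≤ ‖K.starProjection m‖ := hM m m.2
      _ = ‖φ m‖ := rfl
      _ = ‖K₀.orthogonalProjectionOnto u‖ := by rw [hφm]; rfl
      _ ≤ ‖u‖ := by
        simpa using
          K₀.orthogonalProjectionOnto.le_of_opNorm_le K₀.orthogonalProjectionOnto_norm_le u
  · have he : K₀.orthogonalProjectionOnto (K.orthogonalProjectionOnto h) = e ⟨h, hh⟩ :=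
      K₀.orthogonalProjectionOnto_mem_subspace_eq_self (e ⟨h, hh⟩)
    rw [mem_graphSubspace_iff]
    change Kᗮ.starProjection h =
      ψ (e.symm (K₀.orthogonalProjectionOnto (K.orthogonalProjectionOnto h)))
    rw [he, e.symm_apply_apply]
    rfl

end

theorem stmt5_general {H : Type*} [NormedAddCommGroup H] [InnerProductSpace ℂ H] [CompleteSpace H]
    (θ P : H →L[ℂ] H)
    (hP_sa : IsSelfAdjoint P) (hP_idem : P ∘L P = P)
    (hθP : θ = 2 • P - 1) :
    (∀ C : (LinearMap.range (P : H →ₗ[ℂ] H)) →ₗ[ℂ] ((LinearMap.range (P : H →ₗ[ℂ] H))ᗮ),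
        (∀ u, ‖C u‖ ≤ ‖u‖) →
          graphSubspace (LinearMap.range (P : H →ₗ[ℂ] H)) C ∈ SubOS θ ∧
            ∀ M ∈ SubOS θ, graphSubspace (LinearMap.range (P : H →ₗ[ℂ] H)) C ≤ M →
              M = graphSubspace (LinearMap.range (P : H →ₗ[ℂ] H)) C) ∧
    (∀ M ∈ SubOS θ, (∀ M' ∈ SubOS θ, M ≤ M' → M' = M) →
        ∃ C : (LinearMap.range (P : H →ₗ[ℂ] H)) →ₗ[ℂ] ((LinearMap.range (P : H →ₗ[ℂ] H))ᗮ),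
          (∀ u, ‖C u‖ ≤ ‖u‖) ∧ M = graphSubspace (LinearMap.range (P : H →ₗ[ℂ] H)) C) := by
  obtain ⟨_, hP⟩ := isStarProjection_iff_eq_starProjection_range.mp ⟨hP_idem, hP_sa⟩
  rw [hP] at hθP
  subst hθP
  refine ⟨fun C hC => ⟨graphSubspace_mem_subOS hC, fun M hM hle => ?_⟩, fun M hM hmax => ?_⟩
  · exact eq_graphSubspace_of_graphSubspace_le
      (mem_subOS_two_smul_starProjection_sub_one_iff.mp hM).2 hle
  · obtain ⟨hMc, hMK⟩ := mem_subOS_two_smul_starProjection_sub_one_iff.mp hM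
    obtain ⟨C, hC, hle⟩ := exists_contraction_le_graphSubspace hMK hMc
    exact ⟨C, hC, (hmax _ (graphSubspace_mem_subOS hC) hle).symm⟩

/-- For a reflection `θ = 2P - 1`: (1) for every contraction
`C : range P → (range P)ᗮ` the subspace `{x + Cx}` is a maximal element of `Sub_OS(θ)`;
(2) every maximal element of `Sub_OS(θ)` has this form. -/
theorem stmt5 {H : Type*} [NormedAddCommGroup H] [InnerProductSpace ℂ H] [CompleteSpace H]
    (θ P : H →L[ℂ] H)
    (hθ_sa : IsSelfAdjoint θ) (hθ_invol : θ ∘L θ = 1)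
    (hP_sa : IsSelfAdjoint P) (hP_idem : P ∘L P = P)
    (hP_range : ∀ h : H, P h = h ↔ θ h = h)
    (hθP : θ = 2 • P - 1) :
    (∀ C : (LinearMap.range (P : H →ₗ[ℂ] H)) →ₗ[ℂ] ((LinearMap.range (P : H →ₗ[ℂ] H))ᗮ),
        (∀ u, ‖C u‖ ≤ ‖u‖) →
          graphSubspace (LinearMap.range (P : H →ₗ[ℂ] H)) C ∈ SubOS θ ∧
            ∀ M ∈ SubOS θ, graphSubspace (LinearMap.range (P : H →ₗ[ℂ] H)) C ≤ M →
              M = graphSubspace (LinearMap.range (P : H →ₗ[ℂ] H)) C) ∧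
    (∀ M ∈ SubOS θ, (∀ M' ∈ SubOS θ, M ≤ M' → M' = M) →
        ∃ C : (LinearMap.range (P : H →ₗ[ℂ] H)) →ₗ[ℂ] ((LinearMap.range (P : H →ₗ[ℂ] H))ᗮ),
          (∀ u, ‖C u‖ ≤ ‖u‖) ∧ M = graphSubspace (LinearMap.range (P : H →ₗ[ℂ] H)) C) :=
  stmt5_general θ P hP_sa hP_idem hθP
end

section
/- Let θ be a reflection on a complex Hilbert space ℋ, let U : ℋ → ℋ be a unitary operator with θUθ = U*, and let ℋ₊ ⊆ ℋ be a closed subspace with U(ℋ₊) ⊆ ℋ₊ and ⟨h₊, θh₊⟩ ≥ 0 for all h₊ ∈ ℋ₊ (O.S. positivity). Then the operator induced by U on the θ-renormalized space is a selfadjoint contraction; concretely: (1) ⟨Ux, θy⟩ = ⟨x, θUy⟩ for all x, y ∈ ℋ₊ (symmetry), and (2) ⟨Ux, θUx⟩ ≤ ⟨x, θx⟩ for all x ∈ ℋ₊ (contractivity in the renormalized seminorm). -/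
/-!
Symmetry is `θUθ = U*` unfolded. For contractivity, `q(a, b) = Re ⟪a, θ b⟫` is a positive
semidefinite real form on `ℋ₊` for which `U` is symmetric, so Cauchy–Schwarz applied to `x` and
`U²ᵐx` gives `q(Uᵐx, Uᵐx)² ≤ q(x, x) q(U²ᵐx, U²ᵐx)`. Along `m = 2ᵏ` this makes
`q(U^(2ᵏ)x, U^(2ᵏ)x) / q(x, x)` grow at least like `(q(Ux, Ux) / q(x, x))^(2ᵏ)`, while it stays
below `‖θ‖ ‖x‖² / q(x, x)` because `U` is isometric; hence `q(Ux, Ux) ≤ q(x, x)`. The imaginary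
parts of both sides vanish by O.S. positivity.
-/

open scoped ComplexInnerProductSpace ComplexOrder
open ContinuousLinearMap

theorem le_one_of_sq_le_succ {r : ℕ → ℝ} (h : ∀ k, r k ^ 2 ≤ r (k + 1))
    (hr : BddAbove (Set.range r)) : r 0 ≤ 1 := by
  by_contra! h1
  have hpow : ∀ k, r 0 ^ 2 ^ k ≤ r k := by
    intro k
    induction k with
    | zero => simp
    | succ k ih =>
      calc r 0 ^ 2 ^ (k + 1) = (r 0 ^ 2 ^ k) ^ 2 := by rw [pow_succ, pow_mul]
        _ ≤ r k ^ 2 := pow_le_pow_left₀ (by positivity) ih 2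
        _ ≤ r (k + 1) := h k
  obtain ⟨C, hC⟩ := hr
  obtain ⟨k, hk⟩ := pow_unbounded_of_one_lt C h1
  have := (pow_le_pow_right₀ h1.le Nat.lt_two_pow_self.le).trans (hpow k)
  exact (hk.trans_le this).not_ge (hC ⟨k, rfl⟩)

theorem le_of_sq_le_mul_two_mul {p : ℕ → ℝ} (hp : ∀ n, 0 ≤ p n)
    (h : ∀ m, p m ^ 2 ≤ p 0 * p (2 * m)) (hbdd : BddAbove (Set.range p)) : p 1 ≤ p 0 := by
  rcases (hp 0).eq_or_lt with h0 | h0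
  · have h1 := h 1
    rw [← h0, zero_mul] at h1
    nlinarith [hp 1]
  · have hsq : ∀ k, (p (2 ^ k) / p 0) ^ 2 ≤ p (2 ^ (k + 1)) / p 0 := fun k => by
      have hk := h (2 ^ k)
      rw [← pow_succ'] at hk
      rw [div_pow, div_le_div_iff₀ (by positivity) h0]
      nlinarith [mul_le_mul_of_nonneg_right hk h0.le]
    have hbdd' : BddAbove (Set.range fun k => p (2 ^ k) / p 0) := by
      obtain ⟨C, hC⟩ := hbdd
      refine ⟨C / p 0, ?_⟩
      rintro _ ⟨k, rfl⟩
      exact div_le_div_of_nonneg_right (hC ⟨_, rfl⟩) h0.le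
    simpa [div_le_one h0] using le_one_of_sq_le_succ hsq hbdd'

theorem Complex.le_of_re_le_of_nonneg {z w : ℂ} (hz : 0 ≤ z) (hw : 0 ≤ w) (h : z.re ≤ w.re) :
    z ≤ w :=
  Complex.le_def.mpr ⟨h, (Complex.nonneg_iff.mp hz).2.symm.trans (Complex.nonneg_iff.mp hw).2⟩

namespace LinearMap.BilinForm

variable {M : Type*} [AddCommGroup M] [Module ℝ M] {B : LinearMap.BilinForm ℝ M} {T : M → M}

theorem apply_iterate_left (hT : ∀ a b, B (T a) b = B a (T b)) (n : ℕ) (a b : M) :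
    B (T^[n] a) b = B a (T^[n] b) := by
  induction n generalizing a b with
  | zero => rfl
  | succ n ih => rw [Function.iterate_succ_apply, ih, hT, Function.iterate_succ_apply']

theorem apply_map_map_le_of_bddAbove (hB : ∀ a, 0 ≤ B a a) (hT : ∀ a b, B (T a) b = B a (T b))
    (x : M) (hbdd : BddAbove (Set.range fun n => B (T^[n] x) (T^[n] x))) :
    B (T x) (T x) ≤ B x x := by
  refine le_of_sq_le_mul_two_mul (p := fun n => B (T^[n] x) (T^[n] x)) (fun n => hB _)
    (fun m => ?_) hbdd
  have hleft : B x (T^[2 * m] x) = B (T^[m] x) (T^[m] x) := by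
    rw [two_mul, Function.iterate_add_apply, apply_iterate_left hT]
  have hright : B (T^[2 * m] x) x = B (T^[m] x) (T^[m] x) := by
    rw [two_mul, Function.iterate_add_apply, apply_iterate_left hT]
  have hcs := apply_mul_apply_le_of_forall_zero_le B hB x (T^[2 * m] x)
  rw [hleft, hright] at hcs
  rw [sq]
  exact hcs

end LinearMap.BilinForm

section

variable {H : Type*} [NormedAddCommGroup H] [InnerProductSpace ℂ H]

noncomputable def reReflectionForm (θ : H →L[ℂ] H) (Hp : Submodule ℂ H) :
    LinearMap.BilinForm ℝ Hp :=
  LinearMap.mk₂ ℝ (fun a b => RCLike.re ⟪(a : H), θ b⟫)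
    (fun a a' b => by simp)
    (fun c a b => by simp)
    (fun a b b' => by simp)
    (fun c a b => by simp)

@[simp]
theorem reReflectionForm_apply (θ : H →L[ℂ] H) (Hp : Submodule ℂ H) (a b : Hp) :
    reReflectionForm θ Hp a b = RCLike.re ⟪(a : H), θ b⟫ :=
  rfl

theorem re_inner_iterate_apply_le_of_isometry {U : H → H} (hU : ∀ a, ‖U a‖ = ‖a‖)
    (θ : H →L[ℂ] H) (x : H) (n : ℕ) :
    RCLike.re ⟪U^[n] x, θ (U^[n] x)⟫ ≤ ‖θ‖ * ‖x‖ ^ 2 := by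
  have hnorm : ‖U^[n] x‖ = ‖x‖ := congrFun (Function.iterate_invariant (funext hU) n) x
  calc RCLike.re ⟪U^[n] x, θ (U^[n] x)⟫ ≤ ‖U^[n] x‖ * ‖θ (U^[n] x)‖ := re_inner_le_norm _ _
    _ ≤ ‖U^[n] x‖ * (‖θ‖ * ‖U^[n] x‖) := by gcongr; exact θ.le_opNorm _
    _ = ‖θ‖ * ‖x‖ ^ 2 := by rw [hnorm]; ring

theorem inner_apply_reflection_comm [CompleteSpace H] {θ U : H →L[ℂ] H} (hθ : θ ∘L θ = 1)
    (hsym : θ ∘L U ∘L θ = adjoint U) (x y : H) : ⟪U x, θ y⟫ = ⟪x, θ (U y)⟫ := by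
  rw [← adjoint_inner_right, ← hsym]
  have hθθ : θ (θ y) = y := by simpa using DFunLike.congr_fun hθ y
  simp [hθθ]

end

theorem stmt10_general {H : Type*} [NormedAddCommGroup H] [InnerProductSpace ℂ H] [CompleteSpace H]
    (θ U : H →L[ℂ] H) (hθ_invol : θ ∘L θ = 1)
    (hU₁ : (ContinuousLinearMap.adjoint U) ∘L U = 1)
    (hsym : θ ∘L U ∘L θ = ContinuousLinearMap.adjoint U)
    (Hp : Submodule ℂ H)
    (hinv : ∀ h ∈ Hp, U h ∈ Hp)
    (hOS : ∀ h ∈ Hp, (0 : ℂ) ≤ ⟪h, θ h⟫) :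
    (∀ x ∈ Hp, ∀ y ∈ Hp, ⟪U x, θ y⟫ = ⟪x, θ (U y)⟫) ∧
      (∀ x ∈ Hp, ⟪U x, θ (U x)⟫ ≤ ⟪x, θ x⟫) := by
  refine ⟨fun x _ y _ => inner_apply_reflection_comm hθ_invol hsym x y, fun x hx => ?_⟩
  let T : Hp → Hp := fun a => ⟨U a, hinv a a.2⟩
  have hT : ∀ n (a : Hp), (T^[n] a : H) = U^[n] a :=
    Function.Semiconj.iterate_right (f := Subtype.val) (fun _ => rfl)
  let B := reReflectionForm θ Hp
  have hB : ∀ a, 0 ≤ B a a := fun a => (Complex.nonneg_iff.mp (hOS a a.2)).1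
  have hBT : ∀ a b, B (T a) b = B a (T b) := fun a b =>
    congrArg RCLike.re (inner_apply_reflection_comm hθ_invol hsym a b)
  have horbit : BddAbove (Set.range fun n => B (T^[n] ⟨x, hx⟩) (T^[n] ⟨x, hx⟩)) := by
    refine ⟨‖θ‖ * ‖x‖ ^ 2, ?_⟩
    rintro _ ⟨n, rfl⟩
    simpa [B, hT] using re_inner_iterate_apply_le_of_isometry
      ((norm_map_iff_adjoint_comp_self U).mpr hU₁) θ x n
  exact Complex.le_of_re_le_of_nonneg (hOS _ (hinv x hx)) (hOS x hx)
    (B.apply_map_map_le_of_bddAbove hB hBT ⟨x, hx⟩ horbit)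

/-- Let `θ` be a reflection, `U` unitary with `θUθ = U*`, and `Hp` a
`U`-invariant closed subspace satisfying O.S. positivity.  Then the operator induced by
`U` on the `θ`-renormalized space is a selfadjoint contraction:
`⟪Ux, θ y⟫ = ⟪x, θ (U y)⟫` and `⟪Ux, θ (Ux)⟫ ≤ ⟪x, θ x⟫` for `x, y ∈ Hp`. -/
theorem stmt10 {H : Type*} [NormedAddCommGroup H] [InnerProductSpace ℂ H] [CompleteSpace H]
    (θ U : H →L[ℂ] H) (hθ_sa : IsSelfAdjoint θ) (hθ_invol : θ ∘L θ = 1)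
    (hU₁ : (ContinuousLinearMap.adjoint U) ∘L U = 1)
    (hU₂ : U ∘L (ContinuousLinearMap.adjoint U) = 1)
    (hsym : θ ∘L U ∘L θ = ContinuousLinearMap.adjoint U)
    (Hp : Submodule ℂ H) (hHp_closed : IsClosed (Hp : Set H))
    (hinv : ∀ h ∈ Hp, U h ∈ Hp)
    (hOS : ∀ h ∈ Hp, (0 : ℂ) ≤ ⟪h, θ h⟫) :
    (∀ x ∈ Hp, ∀ y ∈ Hp, ⟪U x, θ y⟫ = ⟪x, θ (U y)⟫) ∧
      (∀ x ∈ Hp, ⟪U x, θ (U x)⟫ ≤ ⟪x, θ x⟫) :=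
  stmt10_general θ U hθ_invol hU₁ hsym Hp hinv hOS
end

section
/- Let θ = 2P − I be a reflection on a complex Hilbert space ℋ, let C : Pℋ → P⊥ℋ be a contraction, and let ℋ₊ := {x + Cx : x ∈ range P}. Let U be a unitary operator on ℋ with θUθ = U* and U(ℋ₊) ⊆ ℋ₊. Then for every x ∈ range P there is a unique y ∈ range P with U(x + Cx) = y + Cy, and the contractivity estimate ‖y‖² − ‖Cy‖² ≤ ‖x‖² − ‖Cx‖² holds. -/
/-!
On the graph `ℋ₊` of `C` the indefinite form `[a, b] = ⟪θ a, b⟫` is positive semidefinite, since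
`[u + C u, u + C u] = ‖u‖² - ‖C u‖²`, and `θ U θ = U*` makes `U` self-adjoint for this form.
For `a ∈ ℋ₊` the sequence `s n = [Uⁿ a, Uⁿ a]` therefore satisfies `s (n + 1) = [Uⁿ a, Uⁿ⁺² a]`,
and the Cauchy–Schwarz inequality of the semidefinite form gives `s (n + 1)² ≤ s n * s (n + 2)`.
A nonnegative log-convex sequence that is bounded (by `‖θ‖ ‖a‖²`, as `U` is isometric) cannot
increase, so `s 1 ≤ s 0`, which is the estimate. Uniqueness of `y` holds because `K ⊓ Kᗮ = ⊥`.
-/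

open scoped ComplexInnerProductSpace ComplexOrder
open ContinuousLinearMap
open scoped InnerProductSpace
open RCLike

theorem antitone_of_sq_le_mul_of_bddAbove {a : ℕ → ℝ} (h0 : ∀ n, 0 ≤ a n)
    (hconv : ∀ n, a (n + 1) ^ 2 ≤ a n * a (n + 2)) (hbdd : BddAbove (Set.range a)) :
    Antitone a := by
  refine antitone_nat_of_succ_le fun n => le_of_not_gt fun hlt => ?_
  have hpos : 0 < a n :=
    (h0 n).lt_of_ne fun h => by nlinarith [hconv n, h0 (n + 2)]
  set q := a (n + 1) / a n
  have hq : 1 < q := (one_lt_div hpos).2 hlt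
  have hstep : ∀ k, 0 < a (n + k) ∧ q * a (n + k) ≤ a (n + k + 1) := by
    intro k
    induction k with
    | zero => exact ⟨hpos, (div_mul_cancel₀ _ hpos.ne').le⟩
    | succ k ih =>
      obtain ⟨hk, hqk⟩ := ih
      have hk1 : 0 < a (n + k + 1) := by nlinarith
      refine ⟨hk1, le_of_mul_le_mul_left ?_ hk⟩
      show a (n + k) * (q * a (n + k + 1)) ≤ a (n + k) * a (n + k + 2)
      nlinarith [hconv (n + k), mul_le_mul_of_nonneg_right hqk hk1.le]
  have hgrowth : ∀ k, a n * q ^ k ≤ a (n + k) := by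
    intro k
    induction k with
    | zero => simp
    | succ k ih =>
      calc a n * q ^ (k + 1) = q * (a n * q ^ k) := by ring
        _ ≤ q * a (n + k) := by gcongr
        _ ≤ a (n + (k + 1)) := (hstep k).2
  obtain ⟨M, hM⟩ := hbdd
  obtain ⟨k, hk⟩ := pow_unbounded_of_one_lt (M / a n) hq
  rw [div_lt_iff₀ hpos] at hk
  linarith [hgrowth k, hM ⟨n + k, rfl⟩]

section

variable {𝕜 E : Type*} [RCLike 𝕜] [NormedAddCommGroup E] [InnerProductSpace 𝕜 E]

theorem sq_re_inner_le_of_isSymmetric {T : E →ₗ[𝕜] E} (hT : T.IsSymmetric)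
    {p : Submodule 𝕜 E} (hp : ∀ a ∈ p, 0 ≤ re ⟪T a, a⟫_𝕜) {a b : E} (ha : a ∈ p)
    (hb : b ∈ p) :
    re ⟪T a, b⟫_𝕜 ^ 2 ≤ re ⟪T a, a⟫_𝕜 * re ⟪T b, b⟫_𝕜 := by
  have hsymm : re ⟪T b, a⟫_𝕜 = re ⟪T a, b⟫_𝕜 := by
    rw [hT, ← inner_conj_symm, conj_re]
  have hquad (t : ℝ) :
      0 ≤ re ⟪T b, b⟫_𝕜 * (t * t) + 2 * re ⟪T a, b⟫_𝕜 * t + re ⟪T a, a⟫_𝕜 := by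
    have := hp _ (p.add_mem ha (p.smul_mem (t : 𝕜) hb))
    simp only [map_add, map_smul, inner_add_left, inner_add_right, inner_smul_left,
      inner_smul_right, conj_ofReal, re_ofReal_mul, hsymm] at this
    linarith
  have := discrim_le_zero hquad
  rw [discrim] at this
  linarith

theorem inner_apply_map_apply_eq [CompleteSpace E] {θ U : E →L[𝕜] E}
    (hθU : θ ∘L U = adjoint U ∘L θ) (b : E) :
    ⟪θ (U b), U b⟫_𝕜 = ⟪θ b, U (U b)⟫_𝕜 := by
  rw [← comp_apply θ U, hθU, comp_apply, adjoint_inner_left]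

theorem re_inner_map_apply_le [CompleteSpace E] {θ U : E →L[𝕜] E} (hθ : IsSelfAdjoint θ)
    (hθU : θ ∘L U = adjoint U ∘L θ) (hU : ∀ x, ‖U x‖ = ‖x‖) {p : Submodule 𝕜 E}
    (hp : ∀ a ∈ p, 0 ≤ re ⟪θ a, a⟫_𝕜) (hUp : ∀ a ∈ p, U a ∈ p) {a : E} (ha : a ∈ p) :
    re ⟪θ (U a), U a⟫_𝕜 ≤ re ⟪θ a, a⟫_𝕜 := by
  have hmem : ∀ n, U^[n] a ∈ p := fun n => by
    induction n with
    | zero => exact ha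
    | succ n ih => rw [Function.iterate_succ_apply']; exact hUp _ ih
  have hnorm : ∀ n, ‖U^[n] a‖ = ‖a‖ := fun n => by
    induction n with
    | zero => rfl
    | succ n ih => rw [Function.iterate_succ_apply', hU, ih]
  set s : ℕ → ℝ := fun n => re ⟪θ (U^[n] a), U^[n] a⟫_𝕜
  have hconv : ∀ n, s (n + 1) ^ 2 ≤ s n * s (n + 2) := fun n => by
    have hs : s (n + 1) = re ⟪θ (U^[n] a), U^[n + 2] a⟫_𝕜 := by
      simp only [s, Function.iterate_succ_apply', inner_apply_map_apply_eq hθU]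
    rw [hs]
    exact sq_re_inner_le_of_isSymmetric hθ.isSymmetric hp (hmem n) (hmem (n + 2))
  have hbdd : ∀ n, s n ≤ ‖θ‖ * ‖a‖ ^ 2 := fun n =>
    calc s n ≤ ‖⟪θ (U^[n] a), U^[n] a⟫_𝕜‖ := re_le_norm _
      _ ≤ ‖θ (U^[n] a)‖ * ‖U^[n] a‖ := norm_inner_le_norm _ _
      _ ≤ ‖θ‖ * ‖U^[n] a‖ * ‖U^[n] a‖ := by gcongr; exact le_opNorm _ _
      _ = ‖θ‖ * ‖a‖ ^ 2 := by rw [hnorm]; ring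
  exact antitone_of_sq_le_mul_of_bddAbove (fun n => hp _ (hmem n)) hconv
    ⟨_, Set.forall_mem_range.2 hbdd⟩ (Nat.zero_le 1)

theorem apply_eq_self_of_mem_range {P : E →L[𝕜] E} (hP : P ∘L P = P) {u : E}
    (hu : u ∈ LinearMap.range (P : E →ₗ[𝕜] E)) : P u = u := by
  obtain ⟨w, rfl⟩ := hu
  exact congr($hP w)

theorem apply_eq_zero_of_mem_orthogonal_range [CompleteSpace E] {P : E →L[𝕜] E}
    (hP : IsSelfAdjoint P) {v : E}
    (hv : v ∈ (LinearMap.range (P : E →ₗ[𝕜] E))ᗮ) : P v = 0 := by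
  rw [P.orthogonal_range, hP.adjoint_eq] at hv
  exact hv

theorem re_inner_apply_add_self {θ : E →L[𝕜] E} {K : Submodule 𝕜 E}
    (hK : ∀ u ∈ K, θ u = u) (hKperp : ∀ v ∈ Kᗮ, θ v = -v) {u v : E} (hu : u ∈ K)
    (hv : v ∈ Kᗮ) : re ⟪θ (u + v), u + v⟫_𝕜 = ‖u‖ ^ 2 - ‖v‖ ^ 2 := by
  rw [map_add, hK u hu, hKperp v hv, inner_add_left, inner_add_right, inner_add_right,
    inner_neg_left, inner_neg_left, K.inner_right_of_mem_orthogonal hu hv,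
    K.inner_left_of_mem_orthogonal hu hv, inner_self_eq_norm_sq_to_K,
    inner_self_eq_norm_sq_to_K]
  simp only [add_zero, map_zero, map_add, map_neg, ← ofReal_pow, ofReal_re]
  ring

theorem eq_of_add_eq_add_of_mem_orthogonal {K : Submodule 𝕜 E} {u u' v v' : E} (hu : u ∈ K)
    (hu' : u' ∈ K) (hv : v ∈ Kᗮ) (hv' : v' ∈ Kᗮ) (h : u + v = u' + v') : u = u' := by
  have hsub : u - u' = v' - v := by rw [sub_eq_sub_iff_add_eq_add, h, add_comm]
  refine sub_eq_zero.1 (Submodule.disjoint_def.1 K.orthogonal_disjoint _ (K.sub_mem hu hu') ?_)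
  rw [hsub]
  exact Kᗮ.sub_mem hv' hv

-- the subspace `ℋ₊ = {u + C u : u ∈ K}`
def orthogonalGraph {K : Submodule 𝕜 E} (C : K →ₗ[𝕜] Kᗮ) : Submodule 𝕜 E :=
  LinearMap.range (K.subtype + Kᗮ.subtype ∘ₗ C)

theorem mem_orthogonalGraph {K : Submodule 𝕜 E} {C : K →ₗ[𝕜] Kᗮ} {a : E} :
    a ∈ orthogonalGraph C ↔ ∃ u : K, (u : E) + C u = a :=
  Iff.rfl

end

theorem stmt12_general {H : Type*} [NormedAddCommGroup H] [InnerProductSpace ℂ H] [CompleteSpace H]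
    (θ P U : H →L[ℂ] H)
    (hθ_sa : IsSelfAdjoint θ) (hθ_invol : θ ∘L θ = 1)
    (hP_sa : IsSelfAdjoint P) (hP_idem : P ∘L P = P)
    (hθP : θ = 2 • P - 1)
    (C : (LinearMap.range (P : H →ₗ[ℂ] H)) →ₗ[ℂ] ((LinearMap.range (P : H →ₗ[ℂ] H))ᗮ))
    (hC : ∀ u : LinearMap.range (P : H →ₗ[ℂ] H), ‖C u‖ ≤ ‖u‖)
    (hU₁ : (ContinuousLinearMap.adjoint U) ∘L U = 1)
    (hsym : θ ∘L U ∘L θ = ContinuousLinearMap.adjoint U)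
    (hinv : ∀ h : H, (∃ u : LinearMap.range (P : H →ₗ[ℂ] H), h = (u : H) + (C u : H)) →
      ∃ u : LinearMap.range (P : H →ₗ[ℂ] H), U h = (u : H) + (C u : H)) :
    ∀ x : LinearMap.range (P : H →ₗ[ℂ] H),
      (∃! y : LinearMap.range (P : H →ₗ[ℂ] H), U ((x : H) + (C x : H)) = (y : H) + (C y : H)) ∧
        ∀ y : LinearMap.range (P : H →ₗ[ℂ] H), U ((x : H) + (C x : H)) = (y : H) + (C y : H) →
          ‖(y : H)‖ ^ 2 - ‖(C y : H)‖ ^ 2 ≤ ‖(x : H)‖ ^ 2 - ‖(C x : H)‖ ^ 2 := by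
  have hθK : ∀ u ∈ LinearMap.range (P : H →ₗ[ℂ] H), θ u = u := fun u hu => by
    simp [hθP, apply_eq_self_of_mem_range hP_idem hu, two_smul]
  have hθKperp : ∀ v ∈ (LinearMap.range (P : H →ₗ[ℂ] H))ᗮ, θ v = -v := fun v hv => by
    simp [hθP, apply_eq_zero_of_mem_orthogonal_range hP_sa hv]
  have hform (u : _) : re ⟪θ (u + C u), (u : H) + C u⟫_ℂ = ‖(u : H)‖ ^ 2 - ‖(C u : H)‖ ^ 2 :=
    re_inner_apply_add_self hθK hθKperp u.2 (C u).2
  have hnonneg : ∀ a ∈ orthogonalGraph C, 0 ≤ re ⟪θ a, a⟫_ℂ := fun a ha => by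
    obtain ⟨u, rfl⟩ := mem_orthogonalGraph.1 ha
    exact (hform u).symm ▸ sub_nonneg.2 (pow_le_pow_left₀ (norm_nonneg _) (hC u) 2)
  have hUinv : ∀ a ∈ orthogonalGraph C, U a ∈ orthogonalGraph C := fun a ha => by
    obtain ⟨u, rfl⟩ := mem_orthogonalGraph.1 ha
    obtain ⟨v, hv⟩ := hinv _ ⟨u, rfl⟩
    exact mem_orthogonalGraph.2 ⟨v, hv.symm⟩
  have hθU : θ ∘L U = adjoint U ∘L θ := by
    rw [← hsym, comp_assoc, comp_assoc, hθ_invol]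
    rfl
  intro x
  obtain ⟨y, hy⟩ := hinv _ ⟨x, rfl⟩
  have huniq (z : _) (hz : U (x + C x) = z + C z) : z = y :=
    Subtype.ext (eq_of_add_eq_add_of_mem_orthogonal z.2 y.2 (C z).2 (C y).2 (hz.symm.trans hy))
  refine ⟨⟨y, hy, huniq⟩, fun z hz => ?_⟩
  have h := re_inner_map_apply_le hθ_sa hθU ((norm_map_iff_adjoint_comp_self U).2 hU₁) hnonneg
    hUinv (mem_orthogonalGraph.2 ⟨x, rfl⟩)
  rwa [hz, hform, hform] at h

/-- Let `θ = 2P - 1` be a reflection with fixed space `K = range P`,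
`C : range P → (range P)ᗮ` a contraction, and `Hp := {x + Cx : x ∈ range P}`.  If `U` is
unitary with `θUθ = U*` and `U (Hp) ⊆ Hp`, then for every `x ∈ range P` there is a unique
`y ∈ range P` with `U (x + Cx) = y + Cy`, and `‖y‖² - ‖Cy‖² ≤ ‖x‖² - ‖Cx‖²`. -/
theorem stmt12 {H : Type*} [NormedAddCommGroup H] [InnerProductSpace ℂ H] [CompleteSpace H]
    (θ P U : H →L[ℂ] H)
    (hθ_sa : IsSelfAdjoint θ) (hθ_invol : θ ∘L θ = 1)
    (hP_sa : IsSelfAdjoint P) (hP_idem : P ∘L P = P)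
    (hP_range : ∀ h : H, P h = h ↔ θ h = h)
    (hθP : θ = 2 • P - 1)
    (C : (LinearMap.range (P : H →ₗ[ℂ] H)) →ₗ[ℂ] ((LinearMap.range (P : H →ₗ[ℂ] H))ᗮ))
    (hC : ∀ u : LinearMap.range (P : H →ₗ[ℂ] H), ‖C u‖ ≤ ‖u‖)
    (hU₁ : (ContinuousLinearMap.adjoint U) ∘L U = 1)
    (hU₂ : U ∘L (ContinuousLinearMap.adjoint U) = 1)
    (hsym : θ ∘L U ∘L θ = ContinuousLinearMap.adjoint U)
    (hinv : ∀ h : H, (∃ u : LinearMap.range (P : H →ₗ[ℂ] H), h = (u : H) + (C u : H)) →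
      ∃ u : LinearMap.range (P : H →ₗ[ℂ] H), U h = (u : H) + (C u : H)) :
    ∀ x : LinearMap.range (P : H →ₗ[ℂ] H),
      (∃! y : LinearMap.range (P : H →ₗ[ℂ] H), U ((x : H) + (C x : H)) = (y : H) + (C y : H)) ∧
        ∀ y : LinearMap.range (P : H →ₗ[ℂ] H), U ((x : H) + (C x : H)) = (y : H) + (C y : H) →
          ‖(y : H)‖ ^ 2 - ‖(C y : H)‖ ^ 2 ≤ ‖(x : H)‖ ^ 2 - ‖(C x : H)‖ ^ 2 :=
  stmt12_general θ P U hθ_sa hθ_invol hP_sa hP_idem hθP C hC hU₁ hsym hinv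
end

section
/- Let θ be a reflection on a complex Hilbert space ℋ and let ℋ₀, ℋ₊, ℋ₋ be closed subspaces with θh₀ = h₀ for all h₀ ∈ ℋ₀, θ(ℋ₊) ⊆ ℋ₋, and θ(ℋ₋) ⊆ ℋ₊. Define the extended subspaces ℋ₊^ex := closure of {h₀ + h₊ : h₀ ∈ ℋ₀, h₊ ∈ ℋ₊} and ℋ₋^ex := closure of {h₀ + h₋ : h₀ ∈ ℋ₀, h₋ ∈ ℋ₋}. Then: (1) θ(ℋ₊^ex) ⊆ ℋ₋^ex and θ(ℋ₋^ex) ⊆ ℋ₊^ex; (2) assuming ⟨h₊, θh₊⟩ ≥ 0 for all h₊ ∈ ℋ₊, the extended O.S. positivity ⟨g, θg⟩ ≥ 0 for all g ∈ ℋ₊^ex holds if and only if |⟨h₊, h₀⟩|² ≤ ⟨h₊, θh₊⟩ · ‖h₀‖² for all h₊ ∈ ℋ₊ and all h₀ ∈ ℋ₀. -/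
/-! Since `θ` is symmetric and fixes `H₀`, the O.S. form of `h₀ + h₊` is
`‖h₀‖² + 2 Re ⟪h₊, h₀⟫ + ⟪h₊, θ h₊⟫`. After rotating `h₀` by a unit scalar so that
`⟪h₊, h₀⟫ = |⟪h₊, h₀⟫|`, positivity along the real line through `h₀` is a real quadratic in `t`
that is nonnegative, and its discriminant is exactly `4 (|⟪h₊, h₀⟫|² - ⟪h₊, θ h₊⟫ ‖h₀‖²)`.
Conversely the inequality gives positivity on `H₀ + H₊`, which passes to the closure because
the form is continuous. -/

open scoped ComplexInnerProductSpace ComplexOrder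

namespace Submodule

variable {R M : Type*} [Ring R] [AddCommGroup M] [Module R M] [TopologicalSpace M]
  [IsTopologicalAddGroup M] [ContinuousConstSMul R M]

theorem map_mem_topologicalClosure_sup {f : M →L[R] M} {N A B : Submodule R M}
    (hfix : ∀ x ∈ N, f x = x) (hAB : ∀ x ∈ A, f x ∈ B) :
    ∀ x ∈ (N ⊔ A).topologicalClosure, f x ∈ (N ⊔ B).topologicalClosure := by
  have hsup : ∀ x ∈ N ⊔ A, f x ∈ N ⊔ B := by
    intro x hx
    obtain ⟨a, ha, b, hb, rfl⟩ := mem_sup.mp hx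
    rw [map_add, hfix a ha]
    exact add_mem_sup ha (hAB b hb)
  exact fun x hx => map_mem_closure f.continuous hx hsup

end Submodule

theorem add_two_mul_add_nonneg_of_sq_le_mul {a c x : ℝ} (ha : 0 ≤ a) (hc : 0 ≤ c)
    (h : x ^ 2 ≤ a * c) : 0 ≤ c + 2 * x + a := by
  nlinarith [sq_nonneg (c - a), sq_nonneg (c + a + 2 * x)]

namespace LinearMap.IsSymmetric

variable {H : Type*} [NormedAddCommGroup H] [InnerProductSpace ℂ H] {T : H →ₗ[ℂ] H}

theorem zero_le_inner_self_apply_iff (hT : T.IsSymmetric) (x : H) :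
    (0 : ℂ) ≤ ⟪x, T x⟫ ↔ 0 ≤ (⟪x, T x⟫ : ℂ).re := by
  rw [Complex.nonneg_iff, ← RCLike.im_to_complex, hT.im_inner_self_apply]
  exact and_iff_left rfl

theorem re_inner_add_apply_add {x : H} (hT : T.IsSymmetric) (hx : T x = x) (y : H) :
    (⟪x + y, T (x + y)⟫ : ℂ).re = ‖x‖ ^ 2 + 2 * (⟪y, x⟫ : ℂ).re + (⟪y, T y⟫ : ℂ).re := by
  have hcross : (⟪x, T y⟫ : ℂ) = (starRingEnd ℂ) ⟪y, x⟫ := by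
    rw [← hT, hx, inner_conj_symm]
  rw [map_add, hx, inner_add_left, inner_add_right, inner_add_right, hcross]
  have hself : (⟪x, x⟫ : ℂ).re = ‖x‖ ^ 2 := by
    simpa using inner_self_eq_norm_sq (𝕜 := ℂ) x
  simp only [Complex.add_re, Complex.conj_re, hself]
  ring

theorem re_inner_add_apply_add_nonneg {x y : H} (hT : T.IsSymmetric) (hx : T x = x)
    (hy : 0 ≤ (⟪y, T y⟫ : ℂ).re) (h : ‖(⟪y, x⟫ : ℂ)‖ ^ 2 ≤ (⟪y, T y⟫ : ℂ).re * ‖x‖ ^ 2) :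
    0 ≤ (⟪x + y, T (x + y)⟫ : ℂ).re := by
  rw [hT.re_inner_add_apply_add hx]
  refine add_two_mul_add_nonneg_of_sq_le_mul hy (sq_nonneg _) (le_trans ?_ h)
  exact sq_le_sq' (neg_le_of_abs_le (Complex.abs_re_le_norm _)) (Complex.re_le_norm _)

theorem sq_norm_inner_le_of_forall_smul_add {x y : H} (hT : T.IsSymmetric) (hx : T x = x)
    (h : ∀ c : ℂ, 0 ≤ (⟪c • x + y, T (c • x + y)⟫ : ℂ).re) :
    ‖(⟪y, x⟫ : ℂ)‖ ^ 2 ≤ (⟪y, T y⟫ : ℂ).re * ‖x‖ ^ 2 := by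
  obtain ⟨u, hu, hux⟩ := Complex.exists_norm_eq_mul_self (⟪y, x⟫ : ℂ)
  have hquad : ∀ t : ℝ,
      0 ≤ ‖x‖ ^ 2 * (t * t) + 2 * ‖(⟪y, x⟫ : ℂ)‖ * t + (⟪y, T y⟫ : ℂ).re := by
    intro t
    have hpos := h (t * u)
    rw [hT.re_inner_add_apply_add (by rw [map_smul, hx]), norm_smul, inner_smul_right,
      mul_assoc, ← hux, norm_mul, hu] at hpos
    simp only [Complex.mul_re, Complex.ofReal_re, Complex.ofReal_im, mul_pow, Complex.norm_real,
      Real.norm_eq_abs, sq_abs, zero_mul, sub_zero] at hpos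
    linarith
  have hdisc := discrim_le_zero hquad
  rw [discrim] at hdisc
  nlinarith

end LinearMap.IsSymmetric

theorem isClosed_setOf_re_inner_self_apply_nonneg {H : Type*} [NormedAddCommGroup H]
    [InnerProductSpace ℂ H] (T : H →L[ℂ] H) : IsClosed {x : H | 0 ≤ (⟪x, T x⟫ : ℂ).re} :=
  isClosed_le continuous_const (Complex.continuous_re.comp (continuous_id.inner T.continuous))

theorem stmt13_general {H : Type*} [NormedAddCommGroup H] [InnerProductSpace ℂ H] [CompleteSpace H]
    (θ : H →L[ℂ] H) (hθ_sa : IsSelfAdjoint θ)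
    (H₀ Hp Hm : Submodule ℂ H)
    (hfix : ∀ h ∈ H₀, θ h = h)
    (hpm : ∀ h ∈ Hp, θ h ∈ Hm) (hmp : ∀ h ∈ Hm, θ h ∈ Hp) :
    ((∀ g ∈ (H₀ ⊔ Hp).topologicalClosure, θ g ∈ (H₀ ⊔ Hm).topologicalClosure) ∧
      (∀ g ∈ (H₀ ⊔ Hm).topologicalClosure, θ g ∈ (H₀ ⊔ Hp).topologicalClosure)) ∧
    ((∀ h ∈ Hp, (0 : ℂ) ≤ ⟪h, θ h⟫) →
      ((∀ g ∈ (H₀ ⊔ Hp).topologicalClosure, (0 : ℂ) ≤ ⟪g, θ g⟫) ↔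
        ∀ hp ∈ Hp, ∀ h₀ ∈ H₀,
          ‖(⟪hp, h₀⟫ : ℂ)‖ ^ 2 ≤ (⟪hp, θ hp⟫ : ℂ).re * ‖h₀‖ ^ 2)) := by
  have hθ := hθ_sa.isSymmetric
  refine ⟨⟨Submodule.map_mem_topologicalClosure_sup hfix hpm,
    Submodule.map_mem_topologicalClosure_sup hfix hmp⟩, fun hOS => ⟨?_, ?_⟩⟩
  · intro hpos hp hp_mem h₀ h₀_mem
    refine hθ.sq_norm_inner_le_of_forall_smul_add (hfix h₀ h₀_mem) fun c => ?_
    have hmem := Submodule.add_mem_sup (Submodule.smul_mem _ c h₀_mem) hp_mem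
    exact (hθ.zero_le_inner_self_apply_iff _).mp (hpos _ ((H₀ ⊔ Hp).le_topologicalClosure hmem))
  · intro hCS g hg
    refine (hθ.zero_le_inner_self_apply_iff g).mpr ?_
    refine closure_minimal ?_ (isClosed_setOf_re_inner_self_apply_nonneg θ) hg
    rintro _ hx
    obtain ⟨h₀, h₀_mem, hp, hp_mem, rfl⟩ := Submodule.mem_sup.mp hx
    exact hθ.re_inner_add_apply_add_nonneg (hfix h₀ h₀_mem)
      ((hθ.zero_le_inner_self_apply_iff hp).mp (hOS hp hp_mem)) (hCS hp hp_mem h₀ h₀_mem)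

/-- Let `θ` be a reflection, `H₀, Hp, Hm` closed subspaces with
`θ = id` on `H₀`, `θ(Hp) ⊆ Hm`, `θ(Hm) ⊆ Hp`, and set
`Hp^ex := closure (H₀ + Hp)`, `Hm^ex := closure (H₀ + Hm)`.  Then (1) `θ` interchanges the
extended subspaces, and (2) assuming O.S. positivity on `Hp`, O.S. positivity on `Hp^ex`
holds iff `|⟪h₊, h₀⟫|² ≤ ⟪h₊, θ h₊⟫ ‖h₀‖²` for all `h₊ ∈ Hp`, `h₀ ∈ H₀`. -/
theorem stmt13 {H : Type*} [NormedAddCommGroup H] [InnerProductSpace ℂ H] [CompleteSpace H]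
    (θ : H →L[ℂ] H) (hθ_sa : IsSelfAdjoint θ) (hθ_invol : θ ∘L θ = 1)
    (H₀ Hp Hm : Submodule ℂ H)
    (hH₀_closed : IsClosed (H₀ : Set H)) (hHp_closed : IsClosed (Hp : Set H))
    (hHm_closed : IsClosed (Hm : Set H))
    (hfix : ∀ h ∈ H₀, θ h = h)
    (hpm : ∀ h ∈ Hp, θ h ∈ Hm) (hmp : ∀ h ∈ Hm, θ h ∈ Hp) :
    ((∀ g ∈ (H₀ ⊔ Hp).topologicalClosure, θ g ∈ (H₀ ⊔ Hm).topologicalClosure) ∧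
      (∀ g ∈ (H₀ ⊔ Hm).topologicalClosure, θ g ∈ (H₀ ⊔ Hp).topologicalClosure)) ∧
    ((∀ h ∈ Hp, (0 : ℂ) ≤ ⟪h, θ h⟫) →
      ((∀ g ∈ (H₀ ⊔ Hp).topologicalClosure, (0 : ℂ) ≤ ⟪g, θ g⟫) ↔
        ∀ hp ∈ Hp, ∀ h₀ ∈ H₀,
          ‖(⟪hp, h₀⟫ : ℂ)‖ ^ 2 ≤ (⟪hp, θ hp⟫ : ℂ).re * ‖h₀‖ ^ 2)) :=
  stmt13_general θ hθ_sa H₀ Hp Hm hfix hpm hmp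
end

section
/- Let θ be a reflection on a complex Hilbert space ℋ, and let ℋ₀, ℋ₊ be closed subspaces with θh₀ = h₀ for all h₀ ∈ ℋ₀ and ⟨h₊, θh₊⟩ ≥ 0 for all h₊ ∈ ℋ₊ (O.S. positivity). Let 𝒦 be a complex Hilbert space and q : ℋ₊ → 𝒦 a bounded linear operator with dense range satisfying ⟨q(a), q(b)⟩_𝒦 = ⟨a, θb⟩ for all a, b ∈ ℋ₊. Then the following are equivalent: (1) |⟨h₊, h₀⟩|² ≤ ⟨h₊, θh₊⟩ · ‖h₀‖² for all h₀ ∈ ℋ₀ and h₊ ∈ ℋ₊; (2) there exists a bounded linear operator l : ℋ₀ → 𝒦 with ‖l(h₀)‖_𝒦 ≤ ‖h₀‖ for all h₀ ∈ ℋ₀ and ⟨h₀, h₊⟩ = ⟨l(h₀), q(h₊)⟩_𝒦 for all h₀ ∈ ℋ₀, h₊ ∈ ℋ₊ (ℋ₀ is contractively contained in 𝒦). -/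
/-!
Since `‖q h₊‖² = ⟪h₊, θ h₊⟫`, condition (1) says `|⟪h₀, h₊⟫| ≤ ‖h₀‖ ‖q h₊‖`. Testing it against
`h₀ = P h₊`, the orthogonal projection onto `ℋ₀`, gives `‖P h₊‖ ≤ ‖q h₊‖`, so `q h₊ ↦ P h₊`
extends by density to a contraction `T : 𝒦 → ℋ₀`, and `l = T*` works. Conversely, (2) gives (1)
by Cauchy–Schwarz in `𝒦`.
-/

open scoped ComplexInnerProductSpace ComplexOrder

theorem Submodule.norm_orthogonalProjectionOnto_le_of_norm_inner_le
    {𝕜 E : Type*} [RCLike 𝕜] [NormedAddCommGroup E] [InnerProductSpace 𝕜 E]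
    (K : Submodule 𝕜 E) [K.HasOrthogonalProjection] {x : E} {C : ℝ} (hC : 0 ≤ C)
    (h : ∀ u : K, ‖inner 𝕜 (u : E) x‖ ≤ C * ‖u‖) :
    ‖K.orthogonalProjectionOnto x‖ ≤ C := by
  set w := K.orthogonalProjectionOnto x
  have hw : ‖w‖ ^ 2 ≤ C * ‖w‖ :=
    calc ‖w‖ ^ 2 = ‖inner 𝕜 w w‖ := by rw [inner_self_eq_norm_sq_to_K]; simp
      _ = ‖inner 𝕜 (w : E) x‖ := by rw [Submodule.inner_orthogonalProjectionOnto_eq_of_mem_left]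
      _ ≤ C * ‖w‖ := h w
  rcases (norm_nonneg w).eq_or_lt with hw0 | hw0
  · rw [← hw0]; exact hC
  · nlinarith

section ContractiveContainment

variable {E H 𝒦 : Type*} [AddCommGroup E] [Module ℂ E]
  [NormedAddCommGroup H] [InnerProductSpace ℂ H]
  [NormedAddCommGroup 𝒦] [InnerProductSpace ℂ 𝒦]
  (K : Submodule ℂ H) (j : E →ₗ[ℂ] H) (q : E →ₗ[ℂ] 𝒦)

theorem norm_inner_le_of_exists_contraction
    (h : ∃ l : K →L[ℂ] 𝒦, (∀ u, ‖l u‖ ≤ ‖u‖) ∧ ∀ (u : K) c, ⟪(u : H), j c⟫ = ⟪l u, q c⟫)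
    (u : K) (c : E) : ‖⟪(u : H), j c⟫‖ ≤ ‖u‖ * ‖q c‖ := by
  obtain ⟨l, hl, hlq⟩ := h
  rw [hlq]
  exact (norm_inner_le_norm _ _).trans (mul_le_mul_of_nonneg_right (hl u) (norm_nonneg _))

variable {q} in
theorem exists_contraction_inner_eq_of_norm_inner_le [CompleteSpace 𝒦] [CompleteSpace K]
    (hq : DenseRange q) (h : ∀ (u : K) (c : E), ‖⟪(u : H), j c⟫‖ ≤ ‖u‖ * ‖q c‖) :
    ∃ l : K →L[ℂ] 𝒦, (∀ u, ‖l u‖ ≤ ‖u‖) ∧ ∀ (u : K) c, ⟪(u : H), j c⟫ = ⟪l u, q c⟫ := by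
  set f : E →ₗ[ℂ] K := K.orthogonalProjectionOnto.toLinearMap ∘ₗ j
  have hf : ∀ c, ‖f c‖ ≤ 1 * ‖q c‖ := fun c => by
    rw [one_mul]
    exact K.norm_orthogonalProjectionOnto_le_of_norm_inner_le (norm_nonneg _)
      fun u => (h u c).trans_eq (mul_comm _ _)
  set T := f.extendOfNorm q
  have hT : ‖T‖ ≤ 1 := LinearMap.opNorm_extendOfNorm_le hq zero_le_one hf
  refine ⟨T.adjoint, fun u => ?_, fun u c => ?_⟩
  · calc ‖T.adjoint u‖ ≤ ‖T.adjoint‖ * ‖u‖ := T.adjoint.le_opNorm u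
      _ ≤ ‖u‖ := by
        rw [ContinuousLinearMap.adjoint.norm_map]
        exact mul_le_of_le_one_left (norm_nonneg _) hT
  · rw [ContinuousLinearMap.adjoint_inner_left, LinearMap.extendOfNorm_eq hq ⟨1, hf⟩]
    exact (K.inner_orthogonalProjectionOnto_eq_of_mem_left u (j c)).symm

variable {q} in
theorem exists_contraction_inner_eq_iff [CompleteSpace 𝒦] [CompleteSpace K] (hq : DenseRange q) :
    (∃ l : K →L[ℂ] 𝒦, (∀ u, ‖l u‖ ≤ ‖u‖) ∧ ∀ (u : K) c, ⟪(u : H), j c⟫ = ⟪l u, q c⟫) ↔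
      ∀ (u : K) (c : E), ‖⟪(u : H), j c⟫‖ ≤ ‖u‖ * ‖q c‖ :=
  ⟨norm_inner_le_of_exists_contraction K j q, exists_contraction_inner_eq_of_norm_inner_le K j hq⟩

end ContractiveContainment

theorem stmt14_general {H 𝒦 : Type*}
    [NormedAddCommGroup H] [InnerProductSpace ℂ H] [CompleteSpace H]
    [NormedAddCommGroup 𝒦] [InnerProductSpace ℂ 𝒦] [CompleteSpace 𝒦]
    (θ : H →L[ℂ] H)
    (H₀ Hp : Submodule ℂ H)
    (hH₀_closed : IsClosed (H₀ : Set H))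
    (q : Hp →L[ℂ] 𝒦) (hq_dense : DenseRange q)
    (hq : ∀ a b : Hp, (⟪q a, q b⟫ : ℂ) = ⟪(a : H), θ b⟫) :
    (∀ h₀ ∈ H₀, ∀ hp ∈ Hp,
        ‖(⟪hp, h₀⟫ : ℂ)‖ ^ 2 ≤ (⟪hp, θ hp⟫ : ℂ).re * ‖h₀‖ ^ 2) ↔
      ∃ l : H₀ →L[ℂ] 𝒦, (∀ h₀ : H₀, ‖l h₀‖ ≤ ‖(h₀ : H)‖) ∧
        ∀ (h₀ : H₀) (hp : Hp), (⟪(h₀ : H), (hp : H)⟫ : ℂ) = ⟪l h₀, q hp⟫ := by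
  have : CompleteSpace H₀ := hH₀_closed.completeSpace_coe
  have hqnorm (c : Hp) : (⟪(c : H), θ c⟫).re = ‖q c‖ ^ 2 := by
    rw [← hq, inner_self_eq_norm_sq_to_K]
    norm_cast
  have hsq (u : H₀) (c : Hp) :
      ‖⟪(c : H), u⟫‖ ^ 2 ≤ (⟪(c : H), θ c⟫).re * ‖(u : H)‖ ^ 2 ↔ ‖⟪(u : H), c⟫‖ ≤ ‖u‖ * ‖q c‖ := by
    rw [hqnorm, norm_inner_symm, ← mul_pow, mul_comm ‖q c‖,
      pow_le_pow_iff_left₀ (norm_nonneg _) (by positivity) two_ne_zero]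
    rfl
  refine Iff.trans ?_
    (exists_contraction_inner_eq_iff H₀ Hp.subtype (q := (q : Hp →ₗ[ℂ] 𝒦)) hq_dense).symm
  exact ⟨fun h u c => (hsq u c).1 (h u u.2 c c.2),
    fun h h₀ hh₀ hp hhp => (hsq ⟨h₀, hh₀⟩ ⟨hp, hhp⟩).2 (h ⟨h₀, hh₀⟩ ⟨hp, hhp⟩)⟩

/-- Let `θ` be a reflection, `H₀, Hp` closed subspaces with `θ = id` on
`H₀` and O.S. positivity on `Hp`, and let `q : Hp → 𝒦` realize the θ-renormalized
completion (`q` bounded with dense range, `⟪q a, q b⟫_𝒦 = ⟪a, θ b⟫`).  Then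
`|⟪h₊, h₀⟫|² ≤ ⟪h₊, θ h₊⟫ ‖h₀‖²` for all `h₀ ∈ H₀, h₊ ∈ Hp` iff there is a contractive
`l : H₀ → 𝒦` with `⟪h₀, h₊⟫ = ⟪l h₀, q h₊⟫_𝒦`. -/
theorem stmt14 {H 𝒦 : Type*}
    [NormedAddCommGroup H] [InnerProductSpace ℂ H] [CompleteSpace H]
    [NormedAddCommGroup 𝒦] [InnerProductSpace ℂ 𝒦] [CompleteSpace 𝒦]
    (θ : H →L[ℂ] H) (hθ_sa : IsSelfAdjoint θ) (hθ_invol : θ ∘L θ = 1)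
    (H₀ Hp : Submodule ℂ H)
    (hH₀_closed : IsClosed (H₀ : Set H)) (hHp_closed : IsClosed (Hp : Set H))
    (hfix : ∀ h ∈ H₀, θ h = h)
    (hOS : ∀ h ∈ Hp, (0 : ℂ) ≤ ⟪h, θ h⟫)
    (q : Hp →L[ℂ] 𝒦) (hq_dense : DenseRange q)
    (hq : ∀ a b : Hp, (⟪q a, q b⟫ : ℂ) = ⟪(a : H), θ b⟫) :
    (∀ h₀ ∈ H₀, ∀ hp ∈ Hp,
        ‖(⟪hp, h₀⟫ : ℂ)‖ ^ 2 ≤ (⟪hp, θ hp⟫ : ℂ).re * ‖h₀‖ ^ 2) ↔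
      ∃ l : H₀ →L[ℂ] 𝒦, (∀ h₀ : H₀, ‖l h₀‖ ≤ ‖(h₀ : H)‖) ∧
        ∀ (h₀ : H₀) (hp : Hp), (⟪(h₀ : H), (hp : H)⟫ : ℂ) = ⟪l h₀, q hp⟫ :=
  stmt14_general θ H₀ Hp hH₀_closed q hq_dense hq
end

section
/- Let θ be a reflection on a complex Hilbert space ℋ and let ℋ₀, ℋ₊, ℋ₋ be closed subspaces with θh₀ = h₀ for all h₀ ∈ ℋ₀, θ(ℋ₊) ⊆ ℋ₋, and θ(ℋ₋) ⊆ ℋ₊; let E₀, E₊, E₋ be the corresponding orthogonal projections, and let E₊^ex and E₋^ex be the orthogonal projections onto ℋ₊^ex := closure(ℋ₀ + ℋ₊) and ℋ₋^ex := closure(ℋ₀ + ℋ₋) respectively. If the Markov property E₊E₀E₋ = E₊E₋ holds, then E₊^ex E₀ = E₊^ex E₋^ex. -/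
open scoped ComplexInnerProductSpace ComplexOrder

/-- The orthogonal projection of `H` onto `M`, as an operator `H →L[ℂ] H`. -/
noncomputable def orthProj {H : Type*} [NormedAddCommGroup H] [InnerProductSpace ℂ H]
    (M : Submodule ℂ H) [M.HasOrthogonalProjection] : H →L[ℂ] H :=
  M.subtypeL ∘L M.orthogonalProjectionOnto

/-!
The Markov property says that `E₊E₀` and `E₊` agree on `ℋ₋`; they also agree on `ℋ₀`, hence on
`ℋ₋^ex`, i.e. `E₊E₀E₋^ex = E₊E₋^ex`, which by `E₀E₋^ex = E₀` reads `E₊E₀ = E₊E₋^ex`. Since also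
`E₀E₀ = E₀E₋^ex`, the range of `E₀ - E₋^ex` is orthogonal to `ℋ₀ + ℋ₊`, hence to `ℋ₊^ex`.
-/

theorem orthProj_eq_starProjection {H : Type*} [NormedAddCommGroup H] [InnerProductSpace ℂ H]
    (M : Submodule ℂ H) [M.HasOrthogonalProjection] : orthProj M = M.starProjection :=
  rfl

namespace Submodule

variable {𝕜 E F : Type*} [RCLike 𝕜] [NormedAddCommGroup E] [InnerProductSpace 𝕜 E]
  [NormedAddCommGroup F] [NormedSpace 𝕜 F] {K L : Submodule 𝕜 E}
  [K.HasOrthogonalProjection] [L.HasOrthogonalProjection]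
  [(K ⊔ L).topologicalClosure.HasOrthogonalProjection]

theorem comp_starProjection_topologicalClosure_sup_eq {S T : E →L[𝕜] F}
    (hK : S ∘L K.starProjection = T ∘L K.starProjection)
    (hL : S ∘L L.starProjection = T ∘L L.starProjection) :
    S ∘L (K ⊔ L).topologicalClosure.starProjection =
      T ∘L (K ⊔ L).topologicalClosure.starProjection := by
  have agree_on {M : Submodule 𝕜 E} [M.HasOrthogonalProjection]
      (h : S ∘L M.starProjection = T ∘L M.starProjection) : M ≤ (S - T).ker := fun x hx => by
    simpa [sub_eq_zero, starProjection_eq_self_iff.mpr hx] using congr($h x)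
  have hle : (K ⊔ L).topologicalClosure ≤ (S - T).ker :=
    topologicalClosure_minimal _ (sup_le (agree_on hK) (agree_on hL)) (S - T).isClosed_ker
  ext x
  simpa [sub_eq_zero] using hle ((K ⊔ L).topologicalClosure.starProjection_apply_mem x)

theorem starProjection_topologicalClosure_sup_comp_eq {S T : F →L[𝕜] E}
    (hK : K.starProjection ∘L S = K.starProjection ∘L T)
    (hL : L.starProjection ∘L S = L.starProjection ∘L T) :
    (K ⊔ L).topologicalClosure.starProjection ∘L S =
      (K ⊔ L).topologicalClosure.starProjection ∘L T := by
  have mem_orthogonal {M : Submodule 𝕜 E} [M.HasOrthogonalProjection]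
      (h : M.starProjection ∘L S = M.starProjection ∘L T) (x : F) : S x - T x ∈ Mᗮ := by
    rw [← starProjection_apply_eq_zero_iff, map_sub, sub_eq_zero]
    exact congr($h x)
  ext x
  have hx : S x - T x ∈ (K ⊔ L).topologicalClosureᗮ := by
    rw [orthogonal_closure, ← inf_orthogonal]
    exact ⟨mem_orthogonal hK x, mem_orthogonal hL x⟩
  simpa [sub_eq_zero] using (starProjection_apply_eq_zero_iff (K := _)).mpr hx

end Submodule

theorem stmt15_general {H : Type*} [NormedAddCommGroup H] [InnerProductSpace ℂ H] [CompleteSpace H]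
    (H₀ Hp Hm : Submodule ℂ H)
    [CompleteSpace H₀] [CompleteSpace Hp] [CompleteSpace Hm]
    (hMarkov : orthProj Hp ∘L orthProj H₀ ∘L orthProj Hm = orthProj Hp ∘L orthProj Hm) :
    orthProj ((H₀ ⊔ Hp).topologicalClosure) ∘L orthProj H₀ =
      orthProj ((H₀ ⊔ Hp).topologicalClosure) ∘L
        orthProj ((H₀ ⊔ Hm).topologicalClosure) := by
  simp only [orthProj_eq_starProjection] at hMarkov ⊢
  have hE₀ : H₀.starProjection ∘L (H₀ ⊔ Hm).topologicalClosure.starProjection =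
      H₀.starProjection :=
    Submodule.starProjection_comp_starProjection_of_le
      (le_sup_left.trans (Submodule.le_topologicalClosure _))
  have hidem : H₀.starProjection ∘L H₀.starProjection = H₀.starProjection :=
    Submodule.starProjection_comp_starProjection_of_le le_rfl
  have hMarkov_ex : (Hp.starProjection ∘L H₀.starProjection) ∘L
      (H₀ ⊔ Hm).topologicalClosure.starProjection =
        Hp.starProjection ∘L (H₀ ⊔ Hm).topologicalClosure.starProjection :=
    Submodule.comp_starProjection_topologicalClosure_sup_eq
      (by rw [ContinuousLinearMap.comp_assoc, hidem]) hMarkov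
  refine Submodule.starProjection_topologicalClosure_sup_comp_eq ?_ ?_
  · rw [hidem, hE₀]
  · rw [← hMarkov_ex, ContinuousLinearMap.comp_assoc, hE₀]

/-- Let `θ` be a reflection, `H₀, Hp, Hm` closed subspaces with `θ = id`
on `H₀`, `θ(Hp) ⊆ Hm`, `θ(Hm) ⊆ Hp`, with projections `E₀, E₊, E₋`, and let `E₊^ex, E₋^ex`
be the projections onto `closure (H₀ + Hp)` and `closure (H₀ + Hm)`.  If the Markov
property `E₊E₀E₋ = E₊E₋` holds, then `E₊^ex E₀ = E₊^ex E₋^ex`. -/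
theorem stmt15 {H : Type*} [NormedAddCommGroup H] [InnerProductSpace ℂ H] [CompleteSpace H]
    (θ : H →L[ℂ] H) (hθ_sa : IsSelfAdjoint θ) (hθ_invol : θ ∘L θ = 1)
    (H₀ Hp Hm : Submodule ℂ H)
    [CompleteSpace H₀] [CompleteSpace Hp] [CompleteSpace Hm]
    (hfix : ∀ h ∈ H₀, θ h = h)
    (hpm : ∀ h ∈ Hp, θ h ∈ Hm) (hmp : ∀ h ∈ Hm, θ h ∈ Hp)
    (hMarkov : orthProj Hp ∘L orthProj H₀ ∘L orthProj Hm = orthProj Hp ∘L orthProj Hm) :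
    orthProj ((H₀ ⊔ Hp).topologicalClosure) ∘L orthProj H₀ =
      orthProj ((H₀ ⊔ Hp).topologicalClosure) ∘L
        orthProj ((H₀ ⊔ Hm).topologicalClosure) :=
  stmt15_general H₀ Hp Hm hMarkov
end

section
/- Let ℋ be a complex Hilbert space, let E₀, E₊, E₋ be orthogonal projections on ℋ, and let θ be a reflection on ℋ satisfying θE₀ = E₀, θE₊ = E₋θE₊, and θE₋ = E₊θE₋ (i.e., θ fixes the range of E₀, maps the range of E₊ into the range of E₋, and maps the range of E₋ into the range of E₊). If the Markov property E₊E₀E₋ = E₊E₋ holds, then O.S. positivity holds: E₊θE₊ ≥ 0, i.e. ⟨h₊, θh₊⟩ ≥ 0 for every h₊ in the range of E₊. -/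
open scoped ComplexInnerProductSpace ComplexOrder

/-!
Since `θ` maps the range of `E₊` into that of `E₋`, the Markov property lets `E₀` be inserted:
`E₊θE₊ = E₊E₋θE₊ = E₊E₀E₋θE₊ = E₊E₀θE₊`, and `E₀θ = (θE₀)* = E₀`. Hence `E₊θE₊ = E₊E₀E₊`,
which is positive as the compression of the orthogonal projection `E₀` by the self-adjoint `E₊`.
-/

theorem IsSelfAdjoint.mul_eq_self_of_mul_eq_self {M : Type*} [Monoid M] [StarMul M] {a e : M}
    (ha : IsSelfAdjoint a) (he : IsSelfAdjoint e) (h : a * e = e) : e * a = e := by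
  simpa only [star_mul, ha.star_eq, he.star_eq] using congrArg star h

theorem mul_mul_eq_mul_mul_of_markov {M : Type*} [Monoid M] {θ e₀ ep em : M}
    (h₀ : e₀ * θ = e₀) (hp : θ * ep = em * (θ * ep)) (hMarkov : ep * (e₀ * em) = ep * em) :
    ep * (θ * ep) = ep * (e₀ * ep) :=
  calc ep * (θ * ep) = ep * em * (θ * ep) := by rw [mul_assoc, ← hp]
    _ = ep * (e₀ * em) * (θ * ep) := by rw [hMarkov]
    _ = ep * e₀ * (θ * ep) := by rw [mul_assoc ep, mul_assoc e₀, ← hp, ← mul_assoc]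
    _ = ep * (e₀ * ep) := by rw [← mul_assoc, mul_assoc ep, h₀, mul_assoc]

theorem stmt16_general {H : Type*} [NormedAddCommGroup H] [InnerProductSpace ℂ H] [CompleteSpace H]
    (θ E₀ Ep Em : H →L[ℂ] H)
    (hθ_sa : IsSelfAdjoint θ)
    (hE₀_sa : IsSelfAdjoint E₀) (hE₀_idem : E₀ ∘L E₀ = E₀)
    (hEp_sa : IsSelfAdjoint Ep)
    (h₀ : θ ∘L E₀ = E₀)
    (hp : θ ∘L Ep = Em ∘L θ ∘L Ep)
    (hMarkov : Ep ∘L E₀ ∘L Em = Ep ∘L Em) :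
    ∀ h : H, (0 : ℂ) ≤ ⟪h, (Ep ∘L θ ∘L Ep) h⟫ := by
  have hE₀θ : E₀ * θ = E₀ := hθ_sa.mul_eq_self_of_mul_eq_self hE₀_sa h₀
  have hcompress : Ep ∘L θ ∘L Ep = Ep ∘L E₀ ∘L Ep :=
    mul_mul_eq_mul_mul_of_markov hE₀θ hp hMarkov
  have hE₀_pos : E₀.IsPositive :=
    (ContinuousLinearMap.IsIdempotentElem.isPositive_iff_isSelfAdjoint hE₀_idem).mpr hE₀_sa
  have hpos : (Ep ∘L E₀ ∘L Ep).IsPositive := by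
    simpa only [hEp_sa.adjoint_eq] using hE₀_pos.adjoint_conj Ep
  intro h
  rw [hcompress]
  exact hpos.inner_nonneg_right h

/-- Let `E₀, E₊, E₋` be orthogonal projections and `θ` a reflection with
`θE₀ = E₀`, `θE₊ = E₋θE₊`, `θE₋ = E₊θE₋`.  If the Markov property `E₊E₀E₋ = E₊E₋` holds,
then O.S. positivity holds: `E₊θE₊ ≥ 0`. -/
theorem stmt16 {H : Type*} [NormedAddCommGroup H] [InnerProductSpace ℂ H] [CompleteSpace H]
    (θ E₀ Ep Em : H →L[ℂ] H)
    (hθ_sa : IsSelfAdjoint θ) (hθ_invol : θ ∘L θ = 1)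
    (hE₀_sa : IsSelfAdjoint E₀) (hE₀_idem : E₀ ∘L E₀ = E₀)
    (hEp_sa : IsSelfAdjoint Ep) (hEp_idem : Ep ∘L Ep = Ep)
    (hEm_sa : IsSelfAdjoint Em) (hEm_idem : Em ∘L Em = Em)
    (h₀ : θ ∘L E₀ = E₀)
    (hp : θ ∘L Ep = Em ∘L θ ∘L Ep)
    (hm : θ ∘L Em = Ep ∘L θ ∘L Em)
    (hMarkov : Ep ∘L E₀ ∘L Em = Ep ∘L Em) :
    ∀ h : H, (0 : ℂ) ≤ ⟪h, (Ep ∘L θ ∘L Ep) h⟫ :=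
  stmt16_general θ E₀ Ep Em hθ_sa hE₀_sa hE₀_idem hEp_sa h₀ hp hMarkov
end

section
/- Let ℋ₁ and ℋ₂ be complex Hilbert spaces and let ℋ = ℋ₁ ⊕ ℋ₂ be their Hilbert-space direct sum (‖(x,y)‖² = ‖x‖² + ‖y‖²). Let C : ℋ₁ → ℋ₂ be a bounded linear contraction, and let E₊, E₋, E₀ be the orthogonal projections of ℋ onto the closed subspaces Graph(C) = {(x, Cx) : x ∈ ℋ₁}, Graph(−C) = {(x, −Cx) : x ∈ ℋ₁}, and ℋ₁ ⊕ {0} respectively. Then the Markov property E₊E₀E₋ = E₊E₋ holds if and only if C = 0. -/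
open scoped ComplexInnerProductSpace ComplexOrder

/-!
The Markov property `E₊E₀E₋ = E₊E₋` forces `E₀` to preserve inner products between vectors of
`Graph(-C)` and of `Graph(C)`. Since `E₀` sends `(x, -Cx)` to `(x, 0)`, pairing with `(x, Cx)`
gives `‖x‖² = ‖x‖² - ‖Cx‖²`, so `C = 0`. Conversely, for `C = 0` the three projections have the
same range, hence coincide, and the Markov property reduces to idempotence.
-/

section StarProjection

variable {𝕜 E : Type*} [RCLike 𝕜] [NormedAddCommGroup E] [InnerProductSpace 𝕜 E]
  [CompleteSpace E]

namespace ContinuousLinearMap.IsStarProjection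

theorem apply_eq_of_mem_range_of_sub_mem_orthogonal {P : E →L[𝕜] E} (hP : IsStarProjection P)
    {u v : E} (hv : v ∈ P.range) (huv : u - v ∈ P.rangeᗮ) : P u = v := by
  obtain ⟨_, hP_eq⟩ := isStarProjection_iff_eq_starProjection_range.mp hP
  rw [hP_eq]
  exact Submodule.eq_starProjection_of_mem_orthogonal hv huv

theorem apply_eq_self_of_mem_range {P : E →L[𝕜] E} (hP : IsStarProjection P) {v : E}
    (hv : v ∈ P.range) : P v = v :=
  apply_eq_of_mem_range_of_sub_mem_orthogonal hP hv (by simp)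

end ContinuousLinearMap.IsStarProjection

theorem inner_apply_eq_inner_of_comp_comp_eq {P Q R : E →L[𝕜] E}
    (hM : P ∘L Q ∘L R = P ∘L R) (hP : IsSelfAdjoint P) {u v : E}
    (hu : R u = u) (hv : P v = v) : inner 𝕜 (Q u) v = inner 𝕜 u v := by
  have hP_symm (x y : E) : inner 𝕜 (P x) y = inner 𝕜 x (P y) := hP.isSymmetric x y
  calc inner 𝕜 (Q u) v = inner 𝕜 (Q (R u)) (P v) := by rw [hu, hv]
    _ = inner 𝕜 (P (Q (R u))) v := (hP_symm _ _).symm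
    _ = inner 𝕜 (P (R u)) v := congr(inner 𝕜 ($hM u) v)
    _ = inner 𝕜 u v := by rw [hP_symm, hu, hv]

end StarProjection

theorem stmt18_general {H₁ H₂ : Type*}
    [NormedAddCommGroup H₁] [InnerProductSpace ℂ H₁] [CompleteSpace H₁]
    [NormedAddCommGroup H₂] [InnerProductSpace ℂ H₂] [CompleteSpace H₂]
    (C : H₁ →L[ℂ] H₂)
    (Ep Em E₀ : WithLp 2 (H₁ × H₂) →L[ℂ] WithLp 2 (H₁ × H₂))
    (hEp_sa : IsSelfAdjoint Ep) (hEp_idem : Ep ∘L Ep = Ep)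
    (hEp_range : ∀ p : WithLp 2 (H₁ × H₂), p ∈ LinearMap.range (Ep : WithLp 2 (H₁ × H₂) →ₗ[ℂ] WithLp 2 (H₁ × H₂)) ↔
      (WithLp.equiv 2 (H₁ × H₂) p).2 = C (WithLp.equiv 2 (H₁ × H₂) p).1)
    (hEm_sa : IsSelfAdjoint Em) (hEm_idem : Em ∘L Em = Em)
    (hEm_range : ∀ p : WithLp 2 (H₁ × H₂), p ∈ LinearMap.range (Em : WithLp 2 (H₁ × H₂) →ₗ[ℂ] WithLp 2 (H₁ × H₂)) ↔
      (WithLp.equiv 2 (H₁ × H₂) p).2 = - C (WithLp.equiv 2 (H₁ × H₂) p).1)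
    (hE₀_sa : IsSelfAdjoint E₀) (hE₀_idem : E₀ ∘L E₀ = E₀)
    (hE₀_range : ∀ p : WithLp 2 (H₁ × H₂), p ∈ LinearMap.range (E₀ : WithLp 2 (H₁ × H₂) →ₗ[ℂ] WithLp 2 (H₁ × H₂)) ↔
      (WithLp.equiv 2 (H₁ × H₂) p).2 = 0) :
    Ep ∘L E₀ ∘L Em = Ep ∘L Em ↔ C = 0 := by
  have hEp : IsStarProjection Ep := ⟨hEp_idem, hEp_sa⟩
  have hEm : IsStarProjection Em := ⟨hEm_idem, hEm_sa⟩
  have hE₀ : IsStarProjection E₀ := ⟨hE₀_idem, hE₀_sa⟩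
  open ContinuousLinearMap in
  constructor
  · intro hM
    ext x
    have hEm_fix : Em (WithLp.toLp 2 (x, -C x)) = WithLp.toLp 2 (x, -C x) :=
      IsStarProjection.apply_eq_self_of_mem_range hEm ((hEm_range _).mpr rfl)
    have hEp_fix : Ep (WithLp.toLp 2 (x, C x)) = WithLp.toLp 2 (x, C x) :=
      IsStarProjection.apply_eq_self_of_mem_range hEp ((hEp_range _).mpr rfl)
    have hE₀_apply : E₀ (WithLp.toLp 2 (x, -C x)) = WithLp.toLp 2 (x, 0) := by
      refine IsStarProjection.apply_eq_of_mem_range_of_sub_mem_orthogonal hE₀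
        ((hE₀_range _).mpr rfl) ?_
      rw [Submodule.mem_orthogonal]
      intro w hw
      have hw₂ : w.snd = 0 := (hE₀_range w).mp hw
      simp [hw₂]
    have h_inner := inner_apply_eq_inner_of_comp_comp_eq hM hEp_sa hEm_fix hEp_fix
    simpa [hE₀_apply] using h_inner
  · rintro rfl
    have hEp_eq : Ep = E₀ := IsStarProjection.ext hEp hE₀ (by ext w; simp [hEp_range, hE₀_range])
    have hEm_eq : Em = E₀ := IsStarProjection.ext hEm hE₀ (by ext w; simp [hEm_range, hE₀_range])
    rw [hEp_eq, hEm_eq, hE₀_idem, hE₀_idem]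

/-- Let `H = H₁ ⊕ H₂` (ℓ²-direct sum), `C : H₁ → H₂` a bounded
contraction, and let `E₊, E₋, E₀` be the orthogonal projections onto `Graph(C)`,
`Graph(-C)` and `H₁ ⊕ 0`.  Then the Markov property `E₊E₀E₋ = E₊E₋` holds iff `C = 0`. -/
theorem stmt18 {H₁ H₂ : Type*}
    [NormedAddCommGroup H₁] [InnerProductSpace ℂ H₁] [CompleteSpace H₁]
    [NormedAddCommGroup H₂] [InnerProductSpace ℂ H₂] [CompleteSpace H₂]
    (C : H₁ →L[ℂ] H₂) (hC : ∀ x : H₁, ‖C x‖ ≤ ‖x‖)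
    (Ep Em E₀ : WithLp 2 (H₁ × H₂) →L[ℂ] WithLp 2 (H₁ × H₂))
    (hEp_sa : IsSelfAdjoint Ep) (hEp_idem : Ep ∘L Ep = Ep)
    (hEp_range : ∀ p : WithLp 2 (H₁ × H₂), p ∈ LinearMap.range (Ep : WithLp 2 (H₁ × H₂) →ₗ[ℂ] WithLp 2 (H₁ × H₂)) ↔
      (WithLp.equiv 2 (H₁ × H₂) p).2 = C (WithLp.equiv 2 (H₁ × H₂) p).1)
    (hEm_sa : IsSelfAdjoint Em) (hEm_idem : Em ∘L Em = Em)
    (hEm_range : ∀ p : WithLp 2 (H₁ × H₂), p ∈ LinearMap.range (Em : WithLp 2 (H₁ × H₂) →ₗ[ℂ] WithLp 2 (H₁ × H₂)) ↔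
      (WithLp.equiv 2 (H₁ × H₂) p).2 = - C (WithLp.equiv 2 (H₁ × H₂) p).1)
    (hE₀_sa : IsSelfAdjoint E₀) (hE₀_idem : E₀ ∘L E₀ = E₀)
    (hE₀_range : ∀ p : WithLp 2 (H₁ × H₂), p ∈ LinearMap.range (E₀ : WithLp 2 (H₁ × H₂) →ₗ[ℂ] WithLp 2 (H₁ × H₂)) ↔
      (WithLp.equiv 2 (H₁ × H₂) p).2 = 0) :
    Ep ∘L E₀ ∘L Em = Ep ∘L Em ↔ C = 0 :=
  stmt18_general C Ep Em E₀ hEp_sa hEp_idem hEp_range hEm_sa hEm_idem hEm_range hE₀_sa hE₀_idem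
    hE₀_range
end
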